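/- arXiv:2509.18508 — 16 statements merged into one kernel-verified Lean document; each statement's English description precedes it below -/
import Mathlib

section
/- Let f : ℝ^d → ℝ be twice differentiable and satisfy the cubic Taylor upper bound with constant H_k > 0 at the point x, where ∇f(x) ≠ 0. Let α ∈ (0,1), let M ≥ H_k, and set x⁺ = x − ∇f(x)/√(M·‖∇f(x)‖). Then f(x⁺) ≤ f(x) − (2(1−α)/(3√M))·‖∇f(x)‖^{3/2} + (1/(2M‖∇f(x)‖))·[⟨∇f(x), ∇²f(x)∇f(x)⟩ − (4α√M/3)·‖∇f(x)‖^{5/2}]. -/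
open scoped RealInnerProductSpace

/-- one-step descent bound for the gradient step
`x⁺ = x − ∇f(x)/√(M‖∇f(x)‖)` under the cubic Taylor upper bound. -/
theorem cubic_taylor_gradient_step_bound {d : ℕ}
    (f : EuclideanSpace ℝ (Fin d) → ℝ)
    (hf : Differentiable ℝ f) (hf' : Differentiable ℝ (gradient f))
    (x : EuclideanSpace ℝ (Fin d)) (Hk : ℝ) (hHk : 0 < Hk)
    (hgrad : gradient f x ≠ 0)
    (hTaylor : ∀ y, f y ≤ f x + ⟪gradient f x, y - x⟫
      + (1/2) * ⟪fderiv ℝ (gradient f) x (y - x), y - x⟫ + (Hk/3) * ‖y - x‖^3)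
    (α : ℝ) (hα : α ∈ Set.Ioo (0:ℝ) 1) (M : ℝ) (hM : Hk ≤ M)
    (xp : EuclideanSpace ℝ (Fin d))
    (hxp : xp = x - (Real.sqrt (M * ‖gradient f x‖))⁻¹ • gradient f x) :
    f xp ≤ f x - (2*(1-α)/(3*Real.sqrt M)) * ‖gradient f x‖ ^ ((3:ℝ)/2)
      + (1/(2*M*‖gradient f x‖)) *
        (⟪gradient f x, fderiv ℝ (gradient f) x (gradient f x)⟫
          - (4*α*Real.sqrt M/3) * ‖gradient f x‖ ^ ((5:ℝ)/2)) := by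
  obtain ⟨hα0, hα1⟩ := hα
  set g := gradient f x with hg
  set A := fderiv ℝ (gradient f) x with hA
  set G := ‖g‖ with hGdef
  have hG : 0 < G := norm_pos_iff.mpr hgrad
  have hMpos : 0 < M := lt_of_lt_of_le hHk hM
  set c : ℝ := (Real.sqrt (M * G))⁻¹ with hc
  have hMG : 0 < M * G := mul_pos hMpos hG
  have hs : 0 < Real.sqrt (M * G) := Real.sqrt_pos.mpr hMG
  have hcpos : 0 < c := inv_pos.mpr hs
  have key := hTaylor xp
  rw [hxp] at key ⊢
  have hdiff : (x - c • g) - x = (-c) • g := by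
    rw [neg_smul]; abel
  rw [hdiff] at key
  have h1 : ⟪g, (-c) • g⟫ = -c * G^2 := by
    rw [real_inner_smul_right, real_inner_self_eq_norm_sq]
  have h2 : ⟪A ((-c) • g), (-c) • g⟫ = c^2 * ⟪g, A g⟫ := by
    rw [map_smul, real_inner_smul_left, real_inner_smul_right, real_inner_comm]; ring
  have h3 : ‖(-c) • g‖ = c * G := by
    rw [norm_smul, Real.norm_eq_abs, abs_neg, abs_of_nonneg hcpos.le]
  rw [h1, h2, h3] at key
  refine key.trans ?_
  -- pure real inequality now
  set a := Real.sqrt G with hadef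
  set b := Real.sqrt M with hbdef
  have ha : a * a = G := Real.mul_self_sqrt hG.le
  have hb : b * b = M := Real.mul_self_sqrt hMpos.le
  have hapos : 0 < a := Real.sqrt_pos.mpr hG
  have hbpos : 0 < b := Real.sqrt_pos.mpr hMpos
  have hcval : c = (b * a)⁻¹ := by
    rw [hc, Real.sqrt_mul hMpos.le]
  have hr3 : G ^ ((3:ℝ)/2) = G * a := by
    rw [show (3:ℝ)/2 = 1 + 1/2 by norm_num, Real.rpow_add hG, Real.rpow_one,
      ← Real.sqrt_eq_rpow]
  have hr5 : G ^ ((5:ℝ)/2) = G^2 * a := by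
    rw [show (5:ℝ)/2 = (2:ℕ) + 1/2 by norm_num, Real.rpow_add hG, Real.rpow_natCast,
      ← Real.sqrt_eq_rpow]
  rw [hr3, hr5, hcval]
  set Q := ⟪g, A g⟫ with hQ
  have hGa : G = a * a := ha.symm
  have hMb : M = b * b := hb.symm
  rw [hGa, hMb]
  have hane : a ≠ 0 := hapos.ne'
  have hbne : b ≠ 0 := hbpos.ne'
  have hMbb : Hk ≤ b * b := by rw [hb]; exact hM
  have heq : (f x + -(b * a)⁻¹ * (a * a) ^ 2 + 1 / 2 * ((b * a)⁻¹ ^ 2 * Q)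
        + Hk / 3 * ((b * a)⁻¹ * (a * a)) ^ 3)
      - (f x - 2 * (1 - α) / (3 * b) * (a * a * a)
        + 1 / (2 * (b * b) * (a * a)) * (Q - 4 * α * b / 3 * ((a * a) ^ 2 * a)))
      = (Hk - b * b) * a ^ 3 / (3 * b ^ 3) := by
    field_simp
    ring
  have hle : (Hk - b * b) * a ^ 3 / (3 * b ^ 3) ≤ 0 :=
    div_nonpos_of_nonpos_of_nonneg
      (mul_nonpos_of_nonpos_of_nonneg (by linarith) (by positivity)) (by positivity)
  linarith
end

section
/- Let f : ℝ^d → ℝ be twice differentiable and satisfy the cubic Taylor upper bound with constant H_k > 0 at the point x, where ∇f(x) ≠ 0. Let α ∈ (0,1) and set M = max( H_k , 9·⟨∇f(x), ∇²f(x)∇f(x)⟩² / (16α²·‖∇f(x)‖⁵) ). Then the gradient step x⁺ = x − ∇f(x)/√(M·‖∇f(x)‖) satisfies f(x⁺) ≤ f(x) − (2(1−α)/(3√M))·‖∇f(x)‖^{3/2}. -/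
open scoped RealInnerProductSpace

lemma key_arith (s u q Hk α : ℝ) (hs : 0 < s) (hu : 0 < u)
    (hα0 : 0 < α) (hα1 : α < 1)
    (h1 : Hk ≤ s^2) (h2 : 9*q^2 ≤ 16*α^2*u^10*s^2) :
    -((s*u)⁻¹ * (u^2)^2) + (1/2)*(((s*u)⁻¹)^2 * q) + (Hk/3)*((s*u)⁻¹ * u^2)^3
      ≤ -(2*(1-α)/(3*s)) * u^3 := by
  have hq : 3*q ≤ 4*α*u^5*s := by
    nlinarith [sq_nonneg (4*α*u^5*s - 3*q), mul_pos (mul_pos (mul_pos hα0 (pow_pos hu 5)) hs) hα0]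
  have e2 : -(2*(1-α)/(3*s)) * u^3 - (-((s*u)⁻¹ * (u^2)^2) + (1/2)*(((s*u)⁻¹)^2 * q) + (Hk/3)*((s*u)⁻¹ * u^2)^3)
      = ((2+4*α)*s^2*u^5 - 3*s*q - 2*Hk*u^5) / (6*s^3*u^2) := by
    field_simp; ring
  rw [← sub_nonneg, e2]
  apply div_nonneg _ (by positivity)
  nlinarith [mul_le_mul_of_nonneg_left hq hs.le, pow_pos hu 5]

/-- with `M = max(H_k, 9⟨∇f,∇²f∇f⟩²/(16α²‖∇f‖⁵))`, the gradient step
achieves the cubic-model decrease. -/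
theorem cubic_certificate_gradient_step {d : ℕ}
    (f : EuclideanSpace ℝ (Fin d) → ℝ)
    (hf : Differentiable ℝ f) (hf' : Differentiable ℝ (gradient f))
    (x : EuclideanSpace ℝ (Fin d)) (Hk : ℝ) (hHk : 0 < Hk)
    (hgrad : gradient f x ≠ 0)
    (hTaylor : ∀ y, f y ≤ f x + ⟪gradient f x, y - x⟫
      + (1/2) * ⟪fderiv ℝ (gradient f) x (y - x), y - x⟫ + (Hk/3) * ‖y - x‖^3)
    (α : ℝ) (hα : α ∈ Set.Ioo (0:ℝ) 1) (M : ℝ)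
    (hM : M = max Hk
      (9 * ⟪gradient f x, fderiv ℝ (gradient f) x (gradient f x)⟫^2
        / (16 * α^2 * ‖gradient f x‖^5)))
    (xp : EuclideanSpace ℝ (Fin d))
    (hxp : xp = x - (Real.sqrt (M * ‖gradient f x‖))⁻¹ • gradient f x) :
    f xp ≤ f x - (2*(1-α)/(3*Real.sqrt M)) * ‖gradient f x‖ ^ ((3:ℝ)/2) := by
  obtain ⟨hα0, hα1⟩ := hα
  set g := gradient f x with hg
  set A := fderiv ℝ (gradient f) x with hA
  set q : ℝ := ⟪g, A g⟫ with hq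
  have hG : (0:ℝ) < ‖g‖ := norm_pos_iff.mpr hgrad
  have hMHk : Hk ≤ M := hM ▸ le_max_left _ _
  have hM0 : 0 < M := lt_of_lt_of_le hHk hMHk
  set s := Real.sqrt M with hsdef
  set u := Real.sqrt ‖g‖ with hudef
  have hs : 0 < s := Real.sqrt_pos.mpr hM0
  have hu : 0 < u := Real.sqrt_pos.mpr hG
  have hs2 : s^2 = M := Real.sq_sqrt hM0.le
  have hu2 : u^2 = ‖g‖ := Real.sq_sqrt hG.le
  have hsqrtmul : Real.sqrt (M * ‖g‖) = s * u := Real.sqrt_mul hM0.le _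
  have h2 : 9*q^2 ≤ 16*α^2*u^10*s^2 := by
    have hMq : 9*q^2 / (16*α^2*‖g‖^5) ≤ M := hM ▸ le_max_right _ _
    have hden : (0:ℝ) < 16*α^2*‖g‖^5 := by positivity
    rw [div_le_iff₀ hden] at hMq
    calc 9*q^2 ≤ M * (16*α^2*‖g‖^5) := hMq
      _ = 16*α^2*u^10*s^2 := by rw [hs2, ← hu2]; ring
  have hrpow : ‖g‖ ^ ((3:ℝ)/2) = u^3 := by
    rw [show ((3:ℝ)/2) = (1/2)*(3:ℕ) by norm_num, Real.rpow_mul hG.le,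
      ← Real.sqrt_eq_rpow, Real.rpow_natCast]
  set t : ℝ := (s*u)⁻¹ with htdef
  have ht : 0 < t := by positivity
  have hdiff : xp - x = (-t) • g := by
    rw [hxp, hsqrtmul, htdef, sub_sub_cancel_left, neg_smul]
  have hinner1 : ⟪g, xp - x⟫ = -(t * (u^2)^2) := by
    rw [hdiff, real_inner_smul_right, real_inner_self_eq_norm_sq, hu2]; ring
  have hinner2 : ⟪A (xp - x), xp - x⟫ = t^2 * q := by
    rw [hdiff, map_smul, real_inner_smul_left, real_inner_smul_right,
      real_inner_comm, ← hq]
    simp; ring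
  have hnorm : ‖xp - x‖ = t * u^2 := by
    rw [hdiff, norm_smul, hu2]
    simp [abs_of_pos ht]
  have hT := hTaylor xp
  rw [hinner1, hinner2, hnorm] at hT
  have hkey := key_arith s u q Hk α hs hu hα0 hα1 (hs2 ▸ hMHk) h2
  rw [hrpow]
  calc f xp ≤ f x + -(t * (u^2)^2) + 1/2 * (t^2 * q) + Hk/3 * (t*u^2)^3 := hT
    _ ≤ f x + (-(2*(1-α)/(3*s)) * u^3) := by
        have := hkey
        simp only [htdef] at *
        nlinarith [this]
    _ = f x - 2*(1-α)/(3*s) * u^3 := by ring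
end

section
/- Let f : ℝ^d → ℝ be twice differentiable and satisfy the cubic Taylor upper bound with constant H_k > 0 at the point x, where ∇f(x) ≠ 0 and ⟨∇f(x), ∇²f(x)∇f(x)⟩ > 0. Let α ∈ (0,1), set L_x = ⟨∇f(x), ∇²f(x)∇f(x)⟩/‖∇f(x)‖² and M = 9·⟨∇f(x), ∇²f(x)∇f(x)⟩² / (16α²·‖∇f(x)‖⁵), and assume M ≥ H_k. Then the gradient step x⁺ = x − ∇f(x)/√(M·‖∇f(x)‖) satisfies f(x⁺) ≤ f(x) − (8(1−α)α/(9·L_x))·‖∇f(x)‖². -/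
open scoped RealInnerProductSpace

/-- quadratic-model decrease of the gradient step when the
curvature-based constant dominates. -/
theorem quadratic_model_decrease_gradient_step {d : ℕ}
    (f : EuclideanSpace ℝ (Fin d) → ℝ)
    (hf : Differentiable ℝ f) (hf' : Differentiable ℝ (gradient f))
    (x : EuclideanSpace ℝ (Fin d)) (Hk : ℝ) (hHk : 0 < Hk)
    (hgrad : gradient f x ≠ 0)
    (hcurv : 0 < ⟪gradient f x, fderiv ℝ (gradient f) x (gradient f x)⟫)
    (hTaylor : ∀ y, f y ≤ f x + ⟪gradient f x, y - x⟫
      + (1/2) * ⟪fderiv ℝ (gradient f) x (y - x), y - x⟫ + (Hk/3) * ‖y - x‖^3)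
    (α : ℝ) (hα : α ∈ Set.Ioo (0:ℝ) 1) (Lx M : ℝ)
    (hLx : Lx = ⟪gradient f x, fderiv ℝ (gradient f) x (gradient f x)⟫
      / ‖gradient f x‖^2)
    (hM : M = 9 * ⟪gradient f x, fderiv ℝ (gradient f) x (gradient f x)⟫^2
      / (16 * α^2 * ‖gradient f x‖^5))
    (hMH : Hk ≤ M)
    (xp : EuclideanSpace ℝ (Fin d))
    (hxp : xp = x - (Real.sqrt (M * ‖gradient f x‖))⁻¹ • gradient f x) :
    f xp ≤ f x - (8*(1-α)*α/(9*Lx)) * ‖gradient f x‖^2 := by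
  obtain ⟨hα0, hα1⟩ := hα
  set g := gradient f x with hg
  set c := ⟪g, fderiv ℝ (gradient f) x g⟫ with hc
  have hG : 0 < ‖g‖ := norm_pos_iff.mpr hgrad
  set G := ‖g‖ with hGdef
  have hs : Real.sqrt (M * G) = 3 * c / (4 * α * G ^ 2) := by
    have h1 : M * G = (3 * c / (4 * α * G ^ 2)) ^ 2 := by
      rw [hM]; field_simp; ring
    rw [h1, Real.sqrt_sq (by positivity)]
  set t : ℝ := (Real.sqrt (M * G))⁻¹ with ht
  have htval : t = 4 * α * G ^ 2 / (3 * c) := by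
    rw [ht, hs]
    field_simp
  have htpos : 0 < t := by rw [htval]; positivity
  have hdiff : xp - x = (-t) • g := by
    rw [hxp]; module
  have hT := hTaylor xp
  rw [hdiff] at hT
  have h1 : ⟪g, (-t) • g⟫ = -t * G ^ 2 := by
    rw [real_inner_smul_right, real_inner_self_eq_norm_sq]
  have h2 : fderiv ℝ (gradient f) x ((-t) • g) = (-t) • (fderiv ℝ (gradient f) x g) := by
    simp
  have h3 : ⟪fderiv ℝ (gradient f) x ((-t) • g), (-t) • g⟫ = t ^ 2 * c := by
    rw [h2, real_inner_smul_left, real_inner_smul_right, real_inner_comm, ← hc]; ring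
  have h4 : ‖(-t) • g‖ = t * G := by
    rw [norm_smul, norm_neg, Real.norm_eq_abs, abs_of_pos htpos]
  rw [h1, h3, h4] at hT
  have hcube : (Hk / 3) * (t * G) ^ 3 ≤ (M / 3) * (t * G) ^ 3 := by
    have : (0:ℝ) ≤ (t * G) ^ 3 := by positivity
    nlinarith
  have hMval : M = 9 * c ^ 2 / (16 * α ^ 2 * G ^ 5) := hM
  have hLxval : Lx = c / G ^ 2 := hLx
  have key : f xp ≤ f x + (-t * G ^ 2) + (1/2) * (t ^ 2 * c) + (M / 3) * (t * G) ^ 3 :=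
    le_trans hT (by linarith)
  rw [htval, hMval] at key
  rw [hLxval]
  have hc0 : c ≠ 0 := ne_of_gt hcurv
  have hG0 : G ≠ 0 := ne_of_gt hG
  have hα0' : α ≠ 0 := ne_of_gt hα0
  have heq : f x + -(4 * α * G ^ 2 / (3 * c)) * G ^ 2
      + (1/2) * ((4 * α * G ^ 2 / (3 * c)) ^ 2 * c)
      + (9 * c ^ 2 / (16 * α ^ 2 * G ^ 5) / 3) * ((4 * α * G ^ 2 / (3 * c)) * G) ^ 3
      = f x - 8 * (1 - α) * α / (9 * (c / G ^ 2)) * G ^ 2 := by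
    field_simp
    ring
  linarith [heq ▸ key]
end

section
/- Let f : ℝ^d → ℝ be twice differentiable and satisfy the second-order gradient approximation bound with constant H > 0. Let M > 0 and suppose T ∈ ℝ^d satisfies the cubic stationarity equation ∇f(x) + ∇²f(x)(T − x) + M·‖T − x‖·(T − x) = 0. Then ‖∇f(T)‖ ≤ (H + M)·‖T − x‖². -/
open scoped RealInnerProductSpace

/-- gradient norm bound at a cubic-stationary point. -/
theorem grad_norm_bound_at_cubic_stationary {d : ℕ}
    (f : EuclideanSpace ℝ (Fin d) → ℝ)
    (hf : Differentiable ℝ f) (hf' : Differentiable ℝ (gradient f))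
    (H : ℝ) (hH : 0 < H)
    (happrox : ∀ x y : EuclideanSpace ℝ (Fin d),
      ‖gradient f y - gradient f x - fderiv ℝ (gradient f) x (y - x)‖
        ≤ H * ‖x - y‖^2)
    (M : ℝ) (hM : 0 < M) (x T : EuclideanSpace ℝ (Fin d))
    (hT : gradient f x + fderiv ℝ (gradient f) x (T - x)
      + (M * ‖T - x‖) • (T - x) = 0) :
    ‖gradient f T‖ ≤ (H + M) * ‖T - x‖^2 := by
  have h1 := happrox x T
  have h2 : gradient f x + fderiv ℝ (gradient f) x (T - x)
      = -((M * ‖T - x‖) • (T - x)) := by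
    exact eq_neg_of_add_eq_zero_left hT
  have key : gradient f T = (gradient f T - gradient f x - fderiv ℝ (gradient f) x (T - x))
      + (gradient f x + fderiv ℝ (gradient f) x (T - x)) := by abel
  calc ‖gradient f T‖ ≤ ‖gradient f T - gradient f x - fderiv ℝ (gradient f) x (T - x)‖
        + ‖gradient f x + fderiv ℝ (gradient f) x (T - x)‖ := by
        have hb := norm_add_le (gradient f T - gradient f x - fderiv ℝ (gradient f) x (T - x))
          (gradient f x + fderiv ℝ (gradient f) x (T - x))
        rwa [← key] at hb
    _ ≤ H * ‖x - T‖^2 + M * ‖T - x‖^2 := by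
        refine add_le_add h1 ?_
        rw [h2, norm_neg, norm_smul, Real.norm_eq_abs, abs_of_nonneg (by positivity)]
        nlinarith [norm_nonneg (T - x)]
    _ = (H + M) * ‖T - x‖^2 := by rw [norm_sub_rev]; ring
end

section
/- Let f : ℝ^d → ℝ be twice differentiable and satisfy the cubic Taylor upper bound with constant H > 0 at every point. Fix x ∈ ℝ^d and M ≥ H, and let T be a global minimizer over y ∈ ℝ^d of the cubic model m(y) = f(x) + ⟨∇f(x), y−x⟩ + ½⟨∇²f(x)(y−x), y−x⟩ + (M/3)‖y−x‖³. Then for every y ∈ ℝ^d: f(T) ≤ f(y) + ((H + M)/3)·‖y − x‖³. -/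
/-!
The upper bound at `x` together with `H ≤ M` gives `f T ≤ m T ≤ m y`, so the theorem reduces to
the lower cubic Taylor bound `m y ≤ f y + ((H + M)/3)‖y - x‖³`, which is one-dimensional.
Along the segment from `x` to `y` let `w` be `f` minus its second-order Taylor polynomial at `0`,
plus `c t³` with `c = H‖y - x‖³/3`. The upper bound taken from `u` back to `0` says that
`η = w - t w'` satisfies `2η + t² w'' ≥ 0`, i.e. `η / t²` is antitone on `(0, ∞)`; the upper
bound from `0` forward bounds `η / t²` above by a function tending to `0` at `0⁺`. Hence `η ≤ 0`,
so `w'' ≥ 0`, and `w`, convex with `w 0 = w' 0 = 0`, is nonnegative.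
-/

open Set Filter Topology
open scoped RealInnerProductSpace

section OneDim

variable {w w' w'' : ℝ → ℝ}

lemma monotoneOn_Ici_zero_of_deriv2_nonneg (hw : ∀ t, HasDerivAt w (w' t) t)
    (hw' : ∀ t, HasDerivAt w' (w'' t) t) (h0 : w' 0 = 0) (h2 : ∀ t, 0 < t → 0 ≤ w'' t) :
    MonotoneOn w (Ici 0) := by
  have hw'_mono : MonotoneOn w' (Ici 0) :=
    monotoneOn_of_hasDerivWithinAt_nonneg (convex_Ici 0)
      (fun t _ => (hw' t).continuousAt.continuousWithinAt)
      (fun t _ => (hw' t).hasDerivWithinAt)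
      (fun t ht => h2 t (by simpa using ht))
  exact monotoneOn_of_hasDerivWithinAt_nonneg (convex_Ici 0)
    (fun t _ => (hw t).continuousAt.continuousWithinAt)
    (fun t _ => (hw t).hasDerivWithinAt)
    (fun t ht => h0 ▸ hw'_mono self_mem_Ici (interior_subset ht) (interior_subset ht))

lemma deriv2_nonneg_of_expansion_ge (hw : ∀ t, HasDerivAt w (w' t) t)
    (hw' : ∀ t, HasDerivAt w' (w'' t) t) (h0' : w' 0 = 0) (h0'' : w'' 0 = 0) {C : ℝ}
    (hback : ∀ u, 0 < u → 0 ≤ w u - u * w' u + u ^ 2 / 2 * w'' u)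
    (hfwd : ∀ v, 0 < v → w v ≤ C * v ^ 3) {u : ℝ} (hu : 0 < u) : 0 ≤ w'' u := by
  set η : ℝ → ℝ := fun u => w u - u * w' u
  have hη : ∀ u, HasDerivAt η (-(u * w'' u)) u := fun u =>
    ((hw u).sub ((hasDerivAt_id' u).mul (hw' u))).congr_deriv (by ring)
  have hρ : ∀ u : ℝ, 0 < u → HasDerivAt (fun u => η u / u ^ 2)
      ((-(u * w'' u) * u ^ 2 - η u * (2 * u)) / (u ^ 2) ^ 2) u := fun u hu =>
    (hη u).div (by simpa using hasDerivAt_pow 2 u) (by positivity)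
  have hanti : AntitoneOn (fun u => η u / u ^ 2) (Ioi 0) := by
    refine antitoneOn_of_hasDerivWithinAt_nonpos (convex_Ioi 0)
      (fun u hu => (hρ u hu).continuousAt.continuousWithinAt)
      (fun u hu => (hρ u (interior_subset hu)).hasDerivWithinAt) ?_
    intro u hu
    have hu : 0 < u := interior_subset hu
    apply div_nonpos_of_nonpos_of_nonneg _ (by positivity)
    simp only [η]
    nlinarith [hback u hu]
  have hslope : Tendsto (fun v => C * v - w' v / v) (𝓝[>] 0) (𝓝 0) := by
    have h1 : Tendsto (fun v : ℝ => C * v) (𝓝[>] 0) (𝓝 0) := by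
      simpa using ((continuous_const_mul C).tendsto 0).mono_left nhdsWithin_le_nhds
    have h2 := (hw' 0).tendsto_slope_zero_right
    simp only [zero_add, h0', h0'', sub_zero, smul_eq_mul] at h2
    simpa [div_eq_inv_mul] using h1.sub h2
  have hρ_nonpos : η u / u ^ 2 ≤ 0 := by
    refine ge_of_tendsto hslope ?_
    filter_upwards [Ioo_mem_nhdsGT hu] with v hv
    calc η u / u ^ 2 ≤ η v / v ^ 2 := hanti hv.1 hu hv.2.le
      _ ≤ (C * v ^ 3 - v * w' v) / v ^ 2 := by
        gcongr
        exact sub_le_sub_right (hfwd v hv.1) _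
      _ = C * v - w' v / v := by
        field_simp
  have hη_nonpos : w u ≤ u * w' u := by
    simpa [η] using (div_le_iff₀ (by positivity)).mp hρ_nonpos
  nlinarith [hback u hu, pow_pos hu 2]

theorem sub_cubic_le_of_forall_le_add_cubic {ψ ψ' ψ'' : ℝ → ℝ} {c : ℝ}
    (hψ : ∀ t, HasDerivAt ψ (ψ' t) t) (hψ' : ∀ t, HasDerivAt ψ' (ψ'' t) t)
    (hupper : ∀ s t, ψ t ≤ ψ s + (t - s) * ψ' s + (t - s) ^ 2 / 2 * ψ'' s + c * |t - s| ^ 3)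
    {t : ℝ} (ht : 0 ≤ t) :
    ψ 0 + t * ψ' 0 + t ^ 2 / 2 * ψ'' 0 - c * t ^ 3 ≤ ψ t := by
  set w : ℝ → ℝ := fun t => ψ t - (ψ 0 + t * ψ' 0 + t ^ 2 / 2 * ψ'' 0 - c * t ^ 3)
  set w' : ℝ → ℝ := fun t => ψ' t - (ψ' 0 + t * ψ'' 0 - 3 * c * t ^ 2)
  set w'' : ℝ → ℝ := fun t => ψ'' t - (ψ'' 0 - 6 * c * t)
  have hw : ∀ t, HasDerivAt w (w' t) t := fun t =>
    ((hψ t).sub ((((hasDerivAt_id' t).mul_const (ψ' 0)).const_add (ψ 0)).add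
      (((hasDerivAt_pow 2 t).div_const 2).mul_const (ψ'' 0)) |>.sub
      ((hasDerivAt_pow 3 t).const_mul c))).congr_deriv (by push_cast; ring)
  have hw' : ∀ t, HasDerivAt w' (w'' t) t := fun t =>
    ((hψ' t).sub ((((hasDerivAt_id' t).mul_const (ψ'' 0)).const_add (ψ' 0)).sub
      ((hasDerivAt_pow 2 t).const_mul (3 * c)))).congr_deriv (by push_cast; ring)
  have hback : ∀ u, 0 < u → 0 ≤ w u - u * w' u + u ^ 2 / 2 * w'' u := fun u hu => by
    have := hupper u 0
    rw [zero_sub, abs_neg, abs_of_pos hu] at this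
    simp only [w, w', w'']
    linarith
  have hfwd : ∀ v, 0 < v → w v ≤ 2 * c * v ^ 3 := fun v hv => by
    have := hupper 0 v
    rw [sub_zero, abs_of_pos hv] at this
    simp only [w]
    linarith
  have hmono := monotoneOn_Ici_zero_of_deriv2_nonneg hw hw' (by simp [w'])
    fun u hu => deriv2_nonneg_of_expansion_ge hw hw' (by simp [w']) (by simp [w'']) hback hfwd hu
  have := hmono self_mem_Ici ht ht
  simp only [w] at this
  linarith

end OneDim

section InnerProductSpace

variable {E : Type*} [NormedAddCommGroup E] [InnerProductSpace ℝ E] [CompleteSpace E]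

noncomputable def secondOrderTaylor (f : E → ℝ) (x y : E) : ℝ :=
  f x + ⟪gradient f x, y - x⟫ + (1 / 2) * ⟪fderiv ℝ (gradient f) x (y - x), y - x⟫

theorem secondOrderTaylor_sub_cubic_le_of_forall_le_add_cubic {f : E → ℝ}
    (hf : Differentiable ℝ f) (hf' : Differentiable ℝ (gradient f)) {H : ℝ}
    (hupper : ∀ x y, f y ≤ secondOrderTaylor f x y + H / 3 * ‖y - x‖ ^ 3) (x y : E) :
    secondOrderTaylor f x y - H / 3 * ‖y - x‖ ^ 3 ≤ f y := by
  set v := y - x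
  have hline : ∀ t : ℝ, HasDerivAt (fun t : ℝ => x + t • v) v t := fun t => by
    simpa using ((hasDerivAt_id t).smul_const v).const_add x
  have hψ : ∀ t : ℝ, HasDerivAt (fun t => f (x + t • v)) ⟪gradient f (x + t • v), v⟫ t :=
    fun t => by
      rw [inner_gradient_left]
      exact (hf _).hasFDerivAt.comp_hasDerivAt t (hline t)
  have hψ' : ∀ t : ℝ, HasDerivAt (fun t => ⟪gradient f (x + t • v), v⟫)
      ⟪fderiv ℝ (gradient f) (x + t • v) v, v⟫ t := fun t => by
    simpa using ((hf' _).hasFDerivAt.comp_hasDerivAt t (hline t)).inner ℝ (hasDerivAt_const t v)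
  have hupper' : ∀ s t : ℝ, f (x + t • v) ≤ f (x + s • v) + (t - s) * ⟪gradient f (x + s • v), v⟫
      + (t - s) ^ 2 / 2 * ⟪fderiv ℝ (gradient f) (x + s • v) v, v⟫
      + H / 3 * ‖v‖ ^ 3 * |t - s| ^ 3 := fun s t => by
    have h := hupper (x + s • v) (x + t • v)
    rw [secondOrderTaylor, add_sub_add_left_eq_sub, ← sub_smul, map_smul, inner_smul_left,
      inner_smul_right, inner_smul_right, norm_smul, Real.norm_eq_abs, conj_trivial] at h
    linarith
  have := sub_cubic_le_of_forall_le_add_cubic hψ hψ' hupper' zero_le_one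
  simpa [secondOrderTaylor, v] using this

end InnerProductSpace

theorem cubic_model_minimizer_bound_general {d : ℕ}
    (f : EuclideanSpace ℝ (Fin d) → ℝ)
    (hf : Differentiable ℝ f) (hf' : Differentiable ℝ (gradient f))
    (H : ℝ)
    (hTaylor : ∀ x y : EuclideanSpace ℝ (Fin d),
      f y ≤ f x + ⟪gradient f x, y - x⟫
        + (1/2) * ⟪fderiv ℝ (gradient f) x (y - x), y - x⟫ + (H/3) * ‖y - x‖^3)
    (x : EuclideanSpace ℝ (Fin d)) (M : ℝ) (hM : H ≤ M)
    (m : EuclideanSpace ℝ (Fin d) → ℝ)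
    (hm : ∀ y, m y = f x + ⟪gradient f x, y - x⟫
      + (1/2) * ⟪fderiv ℝ (gradient f) x (y - x), y - x⟫ + (M/3) * ‖y - x‖^3)
    (T : EuclideanSpace ℝ (Fin d)) (hT : ∀ y, m T ≤ m y) :
    ∀ y, f T ≤ f y + ((H + M)/3) * ‖y - x‖^3 := by
  intro y
  have hm' : ∀ y, m y = secondOrderTaylor f x y + M / 3 * ‖y - x‖ ^ 3 := hm
  calc f T ≤ secondOrderTaylor f x T + H / 3 * ‖T - x‖ ^ 3 := hTaylor x T
    _ ≤ m T := by rw [hm']; gcongr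
    _ ≤ m y := hT y
    _ = secondOrderTaylor f x y - H / 3 * ‖y - x‖ ^ 3 + (H + M) / 3 * ‖y - x‖ ^ 3 := by
      rw [hm']; ring
    _ ≤ f y + (H + M) / 3 * ‖y - x‖ ^ 3 := by
      gcongr
      exact secondOrderTaylor_sub_cubic_le_of_forall_le_add_cubic hf hf' hTaylor x y

/-- the cubic-model minimizer `T` satisfies
`f(T) ≤ f(y) + ((H+M)/3)‖y−x‖³` for all `y`. -/
theorem cubic_model_minimizer_bound {d : ℕ}
    (f : EuclideanSpace ℝ (Fin d) → ℝ)
    (hf : Differentiable ℝ f) (hf' : Differentiable ℝ (gradient f))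
    (H : ℝ) (hH : 0 < H)
    (hTaylor : ∀ x y : EuclideanSpace ℝ (Fin d),
      f y ≤ f x + ⟪gradient f x, y - x⟫
        + (1/2) * ⟪fderiv ℝ (gradient f) x (y - x), y - x⟫ + (H/3) * ‖y - x‖^3)
    (x : EuclideanSpace ℝ (Fin d)) (M : ℝ) (hM : H ≤ M)
    (m : EuclideanSpace ℝ (Fin d) → ℝ)
    (hm : ∀ y, m y = f x + ⟪gradient f x, y - x⟫
      + (1/2) * ⟪fderiv ℝ (gradient f) x (y - x), y - x⟫ + (M/3) * ‖y - x‖^3)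
    (T : EuclideanSpace ℝ (Fin d)) (hT : ∀ y, m T ≤ m y) :
    ∀ y, f T ≤ f y + ((H + M)/3) * ‖y - x‖^3 :=
  cubic_model_minimizer_bound_general f hf hf' H hTaylor x M hM m hm T hT
end

section
/- Let f : ℝ^d → ℝ be twice differentiable and satisfy the second-order gradient approximation bound with constant H > 0. Let M ≥ 2H and suppose T ∈ ℝ^d satisfies the cubic stationarity equation ∇f(x) + ∇²f(x)(T − x) + M·‖T − x‖·(T − x) = 0. Then ⟨∇f(T), x − T⟩ ≥ ‖∇f(T)‖^{3/2} / √(H + M). -/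
lemma S_nonneg (m u H : ℝ) (hm : 0 ≤ m) (hH : 0 < H) (hu : 0 ≤ u) (hu2 : u ≤ 2*H) :
    0 ≤ 2*m^4+24*m^3*H-6*m^3*u+108*m^2*H^2-48*m^2*H*u+4*m^2*u^2+216*m*H^3-120*m*H^2*u+12*m*H*u^2+m*u^3+162*H^4-72*H^3*u-12*H^2*u^2+6*H*u^3 := by
  have hv : 0 ≤ 2*H - u := by linarith
  nlinarith [sq_nonneg (m^2), mul_nonneg (mul_nonneg (mul_nonneg hm hm) hm) hv,
    mul_nonneg (mul_nonneg (mul_nonneg hm hm) hm) hH.le,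
    sq_nonneg (m*(2*H-u)), mul_nonneg (mul_nonneg (mul_nonneg hm hm) hH.le) hv,
    mul_nonneg (mul_nonneg hm hm) (mul_nonneg hH.le hH.le),
    mul_nonneg hm (mul_nonneg (mul_nonneg hH.le hH.le) hH.le),
    mul_nonneg (mul_nonneg hm hv) (mul_nonneg hH.le hH.le),
    mul_nonneg (mul_nonneg hm hH.le) (sq_nonneg (2*H-u)),
    mul_nonneg (mul_nonneg hm hu) (sq_nonneg (2*H-u)),
    mul_nonneg (mul_nonneg (mul_nonneg hH.le hH.le) hH.le) hH.le,
    mul_nonneg (mul_nonneg (mul_nonneg hH.le hH.le) hH.le) hv,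
    mul_nonneg (mul_nonneg hH.le hH.le) (sq_nonneg (2*H-u)),
    mul_nonneg (mul_nonneg hH.le hu) (sq_nonneg (2*H-u))]

lemma Q_nonneg (m u H : ℝ) (hm : 0 ≤ m) (hH : 0 < H) (hu : 0 ≤ u) (hu2 : u ≤ 2*H) :
    0 ≤ 2*m^5 + 24*m^4*H - 6*m^4*u + 108*m^3*H^2 - 48*m^3*H*u + 4*m^3*u^2
      + 216*m^2*H^3 - 120*m^2*H^2*u + 12*m^2*H*u^2 + m^2*u^3
      + 162*m*H^4 - 72*m*H^3*u - 12*m*H^2*u^2 + 6*m*H*u^3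
      + 54*H^4*u - 44*H^3*u^2 + 9*H^2*u^3 := by
  have hS := S_nonneg m u H hm hH hu hu2
  nlinarith [mul_nonneg hm hS, mul_nonneg (mul_nonneg (mul_nonneg hH.le hH.le) hu) (sq_nonneg (9*u - 22*H)),
    mul_nonneg (mul_nonneg (mul_nonneg hH.le hH.le) hu) (sq_nonneg H)]

lemma key1 (H M a : ℝ) (hH : 0 < H) (hM : 2*H ≤ M) (ha1 : -H ≤ a) (ha2 : a ≤ H) :
    (M^2 - 2*M*a + H^2)^3 ≤ (H+M)^2*(M-a)^4 := by
  have hQ := Q_nonneg (M - 2*H) (H + a) H (by linarith) hH (by linarith) (by linarith)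
  nlinarith [mul_nonneg (show (0:ℝ) ≤ H + a by linarith) hQ]



lemma key2 (H M s τ : ℝ) (hH : 0 < H) (hM : 2*H ≤ M) (hs : 0 ≤ s)
    (hτ1 : -(H*s^3) ≤ τ) (hτ2 : τ ≤ H*s^3) :
    (M^2*s^4 - 2*M*s*τ + H^2*s^4)^3 ≤ (H+M)^2*(M*s^3 - τ)^4 := by
  rcases eq_or_lt_of_le hs with h0 | hs'
  · have hs0 : s = 0 := h0.symm
    have hτ0 : τ = 0 := le_antisymm (by simpa [hs0] using hτ2) (by simpa [hs0] using hτ1)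
    simp [hs0, hτ0]
  · have hs3 : (0:ℝ) < s^3 := by positivity
    have h := key1 H M (τ/s^3) hH hM
      (by rw [neg_le, ← neg_div]; exact (div_le_iff₀ hs3).2 (by linarith))
      ((div_le_iff₀ hs3).2 (by linarith))
    have h12 := mul_le_mul_of_nonneg_right h (show (0:ℝ) ≤ (s^3)^4 by positivity)
    have e1 : (M^2*s^4 - 2*M*s*τ + H^2*s^4)^3 = (M^2 - 2*M*(τ/s^3) + H^2)^3 * (s^3)^4 := by
      field_simp
    have e2 : (H+M)^2*(M*s^3 - τ)^4 = (H+M)^2*(M - τ/s^3)^4 * (s^3)^4 := by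
      field_simp
    rw [e1, e2]; exact h12

set_option maxHeartbeats 1000000

open scoped RealInnerProductSpace


/-- directional progress inequality at a cubic-stationary point
when `M ≥ 2H`. -/
theorem inner_grad_progress_at_cubic_stationary {d : ℕ}
    (f : EuclideanSpace ℝ (Fin d) → ℝ)
    (hf : Differentiable ℝ f) (hf' : Differentiable ℝ (gradient f))
    (H : ℝ) (hH : 0 < H)
    (happrox : ∀ x y : EuclideanSpace ℝ (Fin d),
      ‖gradient f y - gradient f x - fderiv ℝ (gradient f) x (y - x)‖
        ≤ H * ‖x - y‖^2)
    (M : ℝ) (hM : 2 * H ≤ M) (x T : EuclideanSpace ℝ (Fin d))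
    (hT : gradient f x + fderiv ℝ (gradient f) x (T - x)
      + (M * ‖T - x‖) • (T - x) = 0) :
    ⟪gradient f T, x - T⟫ ≥ ‖gradient f T‖ ^ ((3:ℝ)/2) / Real.sqrt (H + M) := by
  set g := gradient f T with hgdef
  set r := T - x with hrdef
  set e := g - gradient f x - fderiv ℝ (gradient f) x r with hedef
  set s := ‖r‖ with hsdef
  have hsnn : 0 ≤ s := norm_nonneg _
  have hE : ‖e‖ ≤ H * s^2 := by
    have h := happrox x T
    rw [norm_sub_rev x T] at h
    exact h
  have h0 : gradient f x + fderiv ℝ (gradient f) x r = -((M * s) • r) :=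
    eq_neg_of_add_eq_zero_left hT
  have hgeq : g = e - (M * s) • r := by
    have : g = e + (gradient f x + fderiv ℝ (gradient f) x r) := by
      rw [hedef]; abel
    rw [this, h0]; abel
  set τ := ⟪e, r⟫ with hτdef
  have hcs : |τ| ≤ ‖e‖ * s := abs_real_inner_le_norm e r
  have hτ2 : τ ≤ H * s^3 := by
    have h1 : τ ≤ ‖e‖ * s := (le_abs_self τ).trans hcs
    nlinarith [mul_le_mul_of_nonneg_right hE hsnn]
  have hτ1 : -(H * s^3) ≤ τ := by
    have h1 : -(‖e‖ * s) ≤ τ := neg_le_of_abs_le hcs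
    nlinarith [mul_le_mul_of_nonneg_right hE hsnn]
  have hA : ⟪g, x - T⟫ = M * s^3 - τ := by
    have hxT : x - T = -r := by rw [hrdef]; abel
    rw [hxT, hgeq, inner_neg_right, inner_sub_left, real_inner_smul_left,
      real_inner_self_eq_norm_sq, ← hτdef]
    push_cast
    ring
  have hAnn : 0 ≤ ⟪g, x - T⟫ := by
    rw [hA]
    nlinarith [pow_nonneg hsnn 3]
  have hnorm : ‖g‖^2 = ‖e‖^2 - 2*(M*s)*τ + M^2*s^2*s^2 := by
    rw [hgeq, @norm_sub_sq_real]
    rw [real_inner_smul_right, norm_smul]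
    rw [mul_pow, Real.norm_eq_abs, sq_abs, ← hτdef]
    ring
  have h1 : ‖g‖^2 ≤ M^2*s^4 - 2*M*s*τ + H^2*s^4 := by
    nlinarith [norm_nonneg e, mul_nonneg (mul_nonneg hH.le hsnn) hsnn]
  have h6 : (‖g‖^2)^3 ≤ (H+M)^2 * ⟪g, x - T⟫^4 := by
    calc (‖g‖^2)^3 ≤ (M^2*s^4 - 2*M*s*τ + H^2*s^4)^3 :=
          pow_le_pow_left₀ (sq_nonneg _) h1 3
      _ ≤ (H+M)^2*(M*s^3 - τ)^4 := key2 H M s τ hH hM hsnn hτ1 hτ2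
      _ = (H+M)^2 * ⟪g, x - T⟫^4 := by rw [hA]
  have hHM : (0:ℝ) < H + M := by linarith
  have h3 : ‖g‖^3 ≤ (H+M) * ⟪g, x - T⟫^2 := by
    have hl : (0:ℝ) ≤ ‖g‖^3 := by positivity
    have hr : (0:ℝ) ≤ (H+M) * ⟪g, x - T⟫^2 := by positivity
    have hsq : (‖g‖^3)^2 ≤ ((H+M) * ⟪g, x - T⟫^2)^2 := by
      calc (‖g‖^3)^2 = (‖g‖^2)^3 := by ring
        _ ≤ (H+M)^2 * ⟪g, x - T⟫^4 := h6
        _ = ((H+M) * ⟪g, x - T⟫^2)^2 := by ring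
    nlinarith [hsq, hl, hr]
  have hsqrt : (0:ℝ) < Real.sqrt (H + M) := Real.sqrt_pos.2 hHM
  rw [ge_iff_le, div_le_iff₀ hsqrt]
  have hL : (‖g‖ ^ ((3:ℝ)/2))^2 = ‖g‖^3 := by
    rw [← Real.rpow_natCast (‖g‖ ^ ((3:ℝ)/2)) 2, ← Real.rpow_mul (norm_nonneg _)]
    norm_num
  have hR : (⟪g, x - T⟫ * Real.sqrt (H+M))^2 = (H+M) * ⟪g, x - T⟫^2 := by
    rw [mul_pow, Real.sq_sqrt hHM.le]; ring
  have hfin : (‖g‖ ^ ((3:ℝ)/2))^2 ≤ (⟪g, x - T⟫ * Real.sqrt (H+M))^2 := by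
    rw [hL, hR]; exact h3
  have := Real.sqrt_le_sqrt hfin
  rwa [Real.sqrt_sq (Real.rpow_nonneg (norm_nonneg _) _),
    Real.sqrt_sq (mul_nonneg hAnn hsqrt.le)] at this
end

section
/- Let f : ℝ^d → ℝ be convex and differentiable, let x* be a global minimizer of f with f* = f(x*), let x⁰ ∈ ℝ^d, and let D > 0 satisfy ‖x − x*‖ ≤ D for every x with f(x) ≤ f(x⁰). Let H > 0 and let (x^k)_{k≥0} be a sequence starting at x⁰ such that for every k ≥ 0: f(x^{k+1}) ≤ f(x^k) and f(x^{k+1}) ≤ f(y) + H·‖y − x^k‖³ for all y ∈ ℝ^d. Then for every k ≥ 1: f(x^k) − f* ≤ 3·H·D³ / (1 + k/3)². -/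
open scoped RealInnerProductSpace

/-- global `O(k⁻²)` rate for a monotone sequence whose steps
dominate the cubic envelope `f(y) + H‖y − xᵏ‖³`. -/
theorem cubic_envelope_rate {d : ℕ}
    (f : EuclideanSpace ℝ (Fin d) → ℝ)
    (hf : Differentiable ℝ f) (hconv : ConvexOn ℝ Set.univ f)
    (xstar : EuclideanSpace ℝ (Fin d)) (hmin : ∀ y, f xstar ≤ f y)
    (D : ℝ) (hD : 0 < D)
    (H : ℝ) (hH : 0 < H)
    (x : ℕ → EuclideanSpace ℝ (Fin d))
    (hlevel : ∀ z : EuclideanSpace ℝ (Fin d), f z ≤ f (x 0) → ‖z - xstar‖ ≤ D)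
    (hmono : ∀ k : ℕ, f (x (k+1)) ≤ f (x k))
    (hstep : ∀ k : ℕ, ∀ y, f (x (k+1)) ≤ f y + H * ‖y - x k‖^3) :
    ∀ k : ℕ, 1 ≤ k →
      f (x k) - f xstar ≤ 3 * H * D^3 / (1 + (k:ℝ)/3)^2 := by
  have hdesc : ∀ k, f (x k) ≤ f (x 0) := by
    intro k
    induction k with
    | zero => exact le_rfl
    | succ n ih => exact (hmono n).trans ih
  have hball : ∀ k, ‖x k - xstar‖ ≤ D := fun k => hlevel _ (hdesc k)
  have key : ∀ k : ℕ, ∀ t : ℝ, 0 ≤ t → t ≤ 1 →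
      f (x (k+1)) - f xstar ≤ (1-t) * (f (x k) - f xstar) + H * t^3 * D^3 := by
    intro k t ht0 ht1
    have hy := hstep k ((1-t) • x k + t • xstar)
    have hconvy : f ((1-t) • x k + t • xstar) ≤ (1-t) * f (x k) + t * f xstar :=
      hconv.2 (Set.mem_univ (x k)) (Set.mem_univ xstar) (by linarith) ht0 (by ring)
    have hnorm : ‖((1-t) • x k + t • xstar) - x k‖ = t * ‖x k - xstar‖ := by
      have h1 : ((1-t) • x k + t • xstar) - x k = t • (xstar - x k) := by
        module
      rw [h1, norm_smul, norm_sub_rev]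
      simp [abs_of_nonneg ht0]
    have hn3 : ‖((1-t) • x k + t • xstar) - x k‖^3 ≤ t^3 * D^3 := by
      rw [hnorm]
      have hb := hball k
      have h2 : t * ‖x k - xstar‖ ≤ t * D := by
        exact mul_le_mul_of_nonneg_left hb ht0
      calc (t * ‖x k - xstar‖)^3 ≤ (t*D)^3 := by
            apply pow_le_pow_left₀ (by positivity) h2
        _ = t^3 * D^3 := by ring
    have h3 : H * ‖((1-t) • x k + t • xstar) - x k‖^3 ≤ H * (t^3 * D^3) :=
      mul_le_mul_of_nonneg_left hn3 hH.le
    nlinarith [hy, hconvy, h3]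
  intro k hk
  induction k, hk using Nat.le_induction with
  | base =>
    have h1 := key 0 1 zero_le_one le_rfl
    have hC : (0:ℝ) < H * D^3 := mul_pos hH (pow_pos hD 3)
    have h2 : (1 + ((1:ℕ):ℝ)/3)^2 = 16/9 := by norm_num
    rw [h2, le_div_iff₀ (by norm_num : (0:ℝ) < 16/9)]
    nlinarith [h1, hC]
  | succ n hn ih =>
    have hC : (0:ℝ) < H * D^3 := mul_pos hH (pow_pos hD 3)
    have hu : (4:ℝ)/3 ≤ 1 + (n:ℝ)/3 := by
      have : (1:ℝ) ≤ (n:ℝ) := by exact_mod_cast hn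
      linarith
    have hcast : (1 + ((n+1:ℕ):ℝ)/3) = (1 + (n:ℝ)/3) + 1/3 := by push_cast; ring
    have h1 := key n
    rw [hcast]
    revert ih hu h1
    generalize (1 + (n:ℝ)/3) = u
    intro ih hu h1
    have hu0 : (0:ℝ) < u := by linarith
    have hv0 : (0:ℝ) < u + 1/3 := by linarith
    have hv1 : (1:ℝ) < u + 1/3 := by linarith
    have ht0 : (0:ℝ) ≤ 1/(u+1/3) := by positivity
    have ht1 : 1/(u+1/3) ≤ 1 := by
      rw [div_le_one hv0]; linarith
    have hkey := h1 (1/(u+1/3)) ht0 ht1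
    have ih2 : (1 - 1/(u+1/3)) * (f (x n) - f xstar)
        ≤ (1 - 1/(u+1/3)) * (3 * H * D^3 / u^2) := by
      apply mul_le_mul_of_nonneg_left ih
      linarith
    have key2 : (1 - 1/(u+1/3)) * (3/u^2) + (1/(u+1/3))^3 ≤ 3/(u+1/3)^2 := by
      have hid : 3/(u+1/3)^2 - ((1 - 1/(u+1/3)) * (3/u^2) + (1/(u+1/3))^3)
          = (u + 2/9)/(u^2 * (u+1/3)^3) := by
        field_simp
        ring
      have hnn : (0:ℝ) ≤ (u + 2/9)/(u^2 * (u+1/3)^3) :=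
        div_nonneg (by linarith) (by positivity)
      linarith
    have harith : (1 - 1/(u+1/3)) * (3 * H * D^3 / u^2) + H * (1/(u+1/3))^3 * D^3
        ≤ 3 * H * D^3 / (u+1/3)^2 := by
      have e1 : (1 - 1/(u+1/3)) * (3 * H * D^3 / u^2) + H * (1/(u+1/3))^3 * D^3
          = (H * D^3) * ((1 - 1/(u+1/3)) * (3/u^2) + (1/(u+1/3))^3) := by ring
      have e2 : 3 * H * D^3 / (u+1/3)^2 = (H * D^3) * (3/(u+1/3)^2) := by ring
      rw [e1, e2]
      exact mul_le_mul_of_nonneg_left key2 hC.le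
    linarith [hkey, ih2, harith]
end

section
/- Let f : ℝ^d → ℝ be twice differentiable and satisfy the cubic Taylor upper bound with constant H > 0 at the point x, where ∇f(x) ≠ 0. Suppose the vanishing directional curvature condition holds at x with constant C > 0, i.e., ⟨∇f(x), ∇²f(x)∇f(x)⟩ / ‖∇f(x)‖² ≤ √(C·‖∇f(x)‖). Set M = max(H, C). Then the gradient step x⁺ = x − ∇f(x)/√(M·‖∇f(x)‖) satisfies f(x⁺) ≤ f(x) − (1/(6√M))·‖∇f(x)‖^{3/2}. -/
open scoped RealInnerProductSpace
set_option maxHeartbeats 1000000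

/-- under vanishing directional curvature, the gradient step with
`M = max(H, C)` achieves a cubic-model decrease. -/
theorem vanishing_directional_curvature_decrease {d : ℕ}
    (f : EuclideanSpace ℝ (Fin d) → ℝ)
    (hf : Differentiable ℝ f) (hf' : Differentiable ℝ (gradient f))
    (x : EuclideanSpace ℝ (Fin d)) (H : ℝ) (hH : 0 < H)
    (hgrad : gradient f x ≠ 0)
    (hTaylor : ∀ y, f y ≤ f x + ⟪gradient f x, y - x⟫
      + (1/2) * ⟪fderiv ℝ (gradient f) x (y - x), y - x⟫ + (H/3) * ‖y - x‖^3)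
    (C : ℝ) (hC : 0 < C)
    (hvdc : ⟪gradient f x, fderiv ℝ (gradient f) x (gradient f x)⟫
        / ‖gradient f x‖^2 ≤ Real.sqrt (C * ‖gradient f x‖))
    (M : ℝ) (hM : M = max H C)
    (xp : EuclideanSpace ℝ (Fin d))
    (hxp : xp = x - (Real.sqrt (M * ‖gradient f x‖))⁻¹ • gradient f x) :
    f xp ≤ f x - (1/(6*Real.sqrt M)) * ‖gradient f x‖ ^ ((3:ℝ)/2) := by
  set g := gradient f x with hg
  have hn : 0 < ‖g‖ := norm_pos_iff.mpr hgrad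
  have hHM : H ≤ M := hM ▸ le_max_left _ _
  have hCM : C ≤ M := hM ▸ le_max_right _ _
  have hM0 : 0 < M := lt_of_lt_of_le hH hHM
  have hMn : 0 < M * ‖g‖ := mul_pos hM0 hn
  set s := Real.sqrt (M * ‖g‖) with hs
  have hs0 : 0 < s := Real.sqrt_pos.mpr hMn
  set m := Real.sqrt M with hm
  set r := Real.sqrt ‖g‖ with hr
  have hm0 : 0 < m := Real.sqrt_pos.mpr hM0
  have hr0 : 0 < r := Real.sqrt_pos.mpr hn
  have hsmr : s = m * r := Real.sqrt_mul hM0.le _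
  have hnr : ‖g‖ = r ^ 2 := (Real.sq_sqrt hn.le).symm
  have hMm : M = m ^ 2 := (Real.sq_sqrt hM0.le).symm
  have hxd : xp - x = (-(s⁻¹)) • g := by
    rw [hxp]; rw [neg_smul]; abel
  have hT := hTaylor xp
  rw [hxd] at hT
  set A := fderiv ℝ (gradient f) x with hA
  set I := ⟪g, A g⟫ with hI
  have hmap : A ((-(s⁻¹)) • g) = (-(s⁻¹)) • A g := map_smul A _ _
  rw [hmap, real_inner_smul_right, real_inner_smul_left, real_inner_smul_right,
    norm_smul] at hT
  have hIcomm : ⟪A g, g⟫ = I := real_inner_comm _ _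
  rw [hIcomm] at hT
  have hnorm : ‖(-(s⁻¹))‖ = s⁻¹ := by
    rw [Real.norm_eq_abs, abs_neg, abs_of_pos (inv_pos.mpr hs0)]
  rw [hnorm, real_inner_self_eq_norm_sq] at hT
  -- bound I
  have hIb : I ≤ s * ‖g‖ ^ 2 := by
    have h1 : I / ‖g‖ ^ 2 ≤ Real.sqrt (C * ‖g‖) := hvdc
    have h2 : Real.sqrt (C * ‖g‖) ≤ s := by
      apply Real.sqrt_le_sqrt
      exact mul_le_mul_of_nonneg_right hCM hn.le
    have h3 : I / ‖g‖ ^ 2 ≤ s := le_trans h1 h2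
    calc I = (I / ‖g‖ ^ 2) * ‖g‖ ^ 2 := by
            field_simp
      _ ≤ s * ‖g‖ ^ 2 := mul_le_mul_of_nonneg_right h3 (by positivity)
  have hrpow : ‖g‖ ^ ((3:ℝ)/2) = r ^ 3 := by
    rw [hnr, ← Real.rpow_natCast r 2, ← Real.rpow_natCast r 3,
      ← Real.rpow_mul hr0.le]
    norm_num
  rw [hrpow]
  have step1 : f xp ≤ f x + -(s⁻¹) * ‖g‖ ^ 2 + 1/2 * (-(s⁻¹) * (-(s⁻¹) * (s * ‖g‖^2)))
      + M/3 * (s⁻¹ * ‖g‖) ^ 3 := by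
    have b1 : 1/2 * (-(s⁻¹) * (-(s⁻¹) * I)) ≤ 1/2 * (-(s⁻¹) * (-(s⁻¹) * (s * ‖g‖^2))) := by
      have : (0:ℝ) ≤ s⁻¹ * s⁻¹ := by positivity
      have e1 : 1/2 * (-(s⁻¹) * (-(s⁻¹) * I)) = 1/2 * ((s⁻¹*s⁻¹) * I) := by ring
      have e2 : 1/2 * (-(s⁻¹) * (-(s⁻¹) * (s * ‖g‖^2))) = 1/2 * ((s⁻¹*s⁻¹) * (s * ‖g‖^2)) := by ring
      rw [e1, e2]
      have := mul_le_mul_of_nonneg_left hIb this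
      linarith
    have b2 : H/3 * (s⁻¹ * ‖g‖) ^ 3 ≤ M/3 * (s⁻¹ * ‖g‖) ^ 3 := by
      have : (0:ℝ) ≤ (s⁻¹ * ‖g‖) ^ 3 := by positivity
      have : H/3 ≤ M/3 := by linarith
      have := mul_le_mul_of_nonneg_right this (by positivity : (0:ℝ) ≤ (s⁻¹ * ‖g‖) ^ 3)
      linarith
    linarith [hT]
  have halg : f x + -(s⁻¹) * ‖g‖ ^ 2 + 1/2 * (-(s⁻¹) * (-(s⁻¹) * (s * ‖g‖^2)))
      + M/3 * (s⁻¹ * ‖g‖) ^ 3 = f x - 1/(6*m) * r^3 := by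
    rw [hsmr, hnr, hMm]
    field_simp
    ring
  linarith [step1, halg ▸ step1]
end

section
/- Let H > 0 and let f : ℝ^d → ℝ be given by f(x) = (H/3)·‖x‖³. Then f is twice differentiable, its Hessian is 2H-Lipschitz in operator norm, i.e., ‖∇²f(x) − ∇²f(y)‖ ≤ 2H·‖x − y‖ for all x, y ∈ ℝ^d, and for every x ∈ ℝ^d: ⟨∇f(x), ∇²f(x)∇f(x)⟩ ≤ √(4H) · ‖∇f(x)‖^{5/2}. -/
open scoped RealInnerProductSpace

/-!
The Hessian of `(H/3)‖x‖³` is `H • A x`, where `A x = ‖x‖ I + ‖x‖⁻¹ x xᵀ` is the derivative of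
`y ↦ ‖y‖ • y`. Each `A x` is symmetric, so the operator norm of `A x - A y` is the supremum of
`|q_x v - q_y v|` over unit vectors, with `q_x v = ‖x‖ ‖v‖² + ⟪x, v⟫² / ‖x‖`; after clearing
denominators, `q_x v - q_y v ≤ 2 ‖x - y‖ ‖v‖²` follows from Cauchy–Schwarz alone.
Along the gradient, `A x x = 2 ‖x‖ x`, so the curvature bound holds with equality.
-/

/-- With `r = ‖x‖`, `s = ‖y‖`, `t = ‖x - y‖`, `n = ‖v‖²`, `a = ⟪x, v⟫`, `b = ⟪y, v⟫`, this is
`q_x v - q_y v ≤ 2 ‖x - y‖ ‖v‖²`. -/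
lemma sub_mul_add_sq_div_sub_sq_div_le {r s t n a b : ℝ} (hr : 0 < r) (hs : 0 < s)
    (ht : 0 ≤ t) (ha : a ^ 2 ≤ r ^ 2 * n) (hb : b ^ 2 ≤ s ^ 2 * n)
    (hab : (a - b) ^ 2 ≤ t ^ 2 * n) (hrs : r - s ≤ t) :
    (r - s) * n + a ^ 2 / r - b ^ 2 / s ≤ 2 * t * n := by
  have hn : 0 ≤ n := nonneg_of_mul_nonneg_right ((sq_nonneg a).trans ha) (by positivity)
  have hprod : |a * b| ≤ r * s * n :=
    abs_le_of_sq_le_sq (by nlinarith [mul_le_mul ha hb (sq_nonneg b) (by positivity)])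
      (by positivity)
  have h₁ : (r - s) * (r * s * n - a * b) ≤ t * (r * s * n - a * b) :=
    mul_le_mul_of_nonneg_right hrs (by linarith [le_abs_self (a * b)])
  have h₂ : (a - b) * (s * a + r * b) ≤ t * (r * s * n + a * b) := by
    refine le_of_abs_le (abs_le_of_sq_le_sq ?_ (mul_nonneg ht (by linarith [neg_abs_le (a * b)])))
    -- equivalent to `(r² n - a²) (s² n - b²) ≥ 0`
    have hcs : n * (s * a + r * b) ^ 2 ≤ (r * s * n + a * b) ^ 2 := by
      nlinarith [mul_nonneg (sub_nonneg.2 ha) (sub_nonneg.2 hb)]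
    calc ((a - b) * (s * a + r * b)) ^ 2 = (a - b) ^ 2 * (s * a + r * b) ^ 2 := by ring
      _ ≤ t ^ 2 * n * (s * a + r * b) ^ 2 := by gcongr
      _ ≤ t ^ 2 * (r * s * n + a * b) ^ 2 := by rw [mul_assoc]; gcongr
      _ = (t * (r * s * n + a * b)) ^ 2 := by ring
  have key : (r - s) * n + a ^ 2 / r - b ^ 2 / s
      = ((r - s) * (r * s * n - a * b) + (a - b) * (s * a + r * b)) / (r * s) := by
    field_simp
    ring
  rw [key, div_le_iff₀ (by positivity)]
  linarith

lemma ContinuousLinearMap.norm_le_of_isSymmetric {𝕜 E : Type*} [RCLike 𝕜] [NormedAddCommGroup E]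
    [InnerProductSpace 𝕜 E] {T : E →L[𝕜] E} (hT : T.IsSymmetric) {C : ℝ} (hC : 0 ≤ C)
    (h : ∀ v, |RCLike.re (inner 𝕜 (T v) v)| ≤ C * ‖v‖ ^ 2) : ‖T‖ ≤ C := by
  rw [T.norm_eq_iSup_rayleighQuotient hT]
  refine ciSup_le fun v => ?_
  rw [ContinuousLinearMap.rayleighQuotient, abs_div, abs_sq]
  exact div_le_of_le_mul₀ (by positivity) hC (h v)

lemma sqrt_four_mul_mul_mul_sq_rpow {H s : ℝ} (hH : 0 ≤ H) (hs : 0 ≤ s) :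
    √(4 * H) * (H * s ^ 2) ^ ((5 : ℝ) / 2) = 2 * H ^ 3 * s ^ 5 := by
  rw [Real.rpow_div_two_eq_sqrt _ (by positivity), Real.sqrt_mul hH, Real.sqrt_sq hs,
    Real.sqrt_mul zero_le_four, Real.rpow_ofNat, show √(4 : ℝ) = 2 by norm_num]
  linear_combination 2 * s ^ 5 * (√H ^ 4 + √H ^ 2 * H + H ^ 2) * Real.sq_sqrt hH

section NormSmulSelf

variable {E : Type*} [NormedAddCommGroup E] [InnerProductSpace ℝ E]

lemma real_inner_sq_le_norm_sq_mul_norm_sq (x v : E) : ⟪x, v⟫ ^ 2 ≤ ‖x‖ ^ 2 * ‖v‖ ^ 2 := by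
  simpa only [sq, real_inner_self_eq_norm_mul_norm, mul_mul_mul_comm]
    using real_inner_mul_inner_self_le x v

/-- At `x = 0` the junk value `‖0‖⁻¹ = 0` makes this `0`, which is the true derivative there. -/
noncomputable def normSmulSelfDeriv (x : E) : E →L[ℝ] E :=
  ‖x‖ • ContinuousLinearMap.id ℝ E + ‖x‖⁻¹ • (innerSL ℝ x).smulRight x

lemma normSmulSelfDeriv_apply (x v : E) :
    normSmulSelfDeriv x v = ‖x‖ • v + (‖x‖⁻¹ * ⟪x, v⟫) • x := by
  simp [normSmulSelfDeriv, smul_smul]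

@[simp]
lemma normSmulSelfDeriv_zero : normSmulSelfDeriv (0 : E) = 0 := by
  simp [normSmulSelfDeriv]

lemma normSmulSelfDeriv_apply_self (x : E) : normSmulSelfDeriv x x = (2 * ‖x‖) • x := by
  rcases eq_or_ne x 0 with rfl | hx
  · simp
  · rw [normSmulSelfDeriv_apply, real_inner_self_eq_norm_sq, ← add_smul]
    congr 1
    field_simp
    ring

lemma normSmulSelfDeriv_isSymmetric (x : E) : (normSmulSelfDeriv x).IsSymmetric := by
  intro u v
  simp only [ContinuousLinearMap.coe_coe, normSmulSelfDeriv_apply, inner_add_left,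
    inner_add_right, real_inner_smul_left, real_inner_smul_right, real_inner_comm u x]
  ring

lemma inner_normSmulSelfDeriv_apply_self (x v : E) :
    ⟪normSmulSelfDeriv x v, v⟫ = ‖x‖ * ‖v‖ ^ 2 + ⟪x, v⟫ ^ 2 / ‖x‖ := by
  rw [normSmulSelfDeriv_apply, inner_add_left, real_inner_smul_left, real_inner_smul_left,
    real_inner_self_eq_norm_sq]
  ring

lemma inner_normSmulSelfDeriv_apply_self_nonneg (x v : E) :
    0 ≤ ⟪normSmulSelfDeriv x v, v⟫ := by
  rw [inner_normSmulSelfDeriv_apply_self]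
  positivity

lemma inner_normSmulSelfDeriv_apply_self_le (x v : E) :
    ⟪normSmulSelfDeriv x v, v⟫ ≤ 2 * ‖x‖ * ‖v‖ ^ 2 := by
  have : ⟪x, v⟫ ^ 2 / ‖x‖ ≤ ‖x‖ * ‖v‖ ^ 2 :=
    div_le_of_le_mul₀ (norm_nonneg x) (by positivity)
      ((real_inner_sq_le_norm_sq_mul_norm_sq x v).trans_eq (by ring))
  rw [inner_normSmulSelfDeriv_apply_self]
  linarith

lemma inner_normSmulSelfDeriv_sub_le (x y v : E) :
    ⟪normSmulSelfDeriv x v, v⟫ - ⟪normSmulSelfDeriv y v, v⟫ ≤ 2 * ‖x - y‖ * ‖v‖ ^ 2 := by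
  rcases eq_or_ne x 0 with rfl | hx
  · simp only [normSmulSelfDeriv_zero, zero_sub, norm_neg, zero_apply, inner_zero_left, neg_le]
    exact (neg_nonpos.2 (by positivity)).trans (inner_normSmulSelfDeriv_apply_self_nonneg y v)
  rcases eq_or_ne y 0 with rfl | hy
  · simpa using inner_normSmulSelfDeriv_apply_self_le x v
  rw [inner_normSmulSelfDeriv_apply_self, inner_normSmulSelfDeriv_apply_self]
  have := sub_mul_add_sq_div_sub_sq_div_le (norm_pos_iff.2 hx) (norm_pos_iff.2 hy)
    (norm_nonneg _) (real_inner_sq_le_norm_sq_mul_norm_sq x v)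
    (real_inner_sq_le_norm_sq_mul_norm_sq y v)
    (by rw [← inner_sub_left]; exact real_inner_sq_le_norm_sq_mul_norm_sq (x - y) v)
    (norm_sub_norm_le x y)
  linarith

lemma norm_normSmulSelfDeriv_sub_le (x y : E) :
    ‖normSmulSelfDeriv x - normSmulSelfDeriv y‖ ≤ 2 * ‖x - y‖ := by
  refine ContinuousLinearMap.norm_le_of_isSymmetric
    ((normSmulSelfDeriv_isSymmetric x).sub (normSmulSelfDeriv_isSymmetric y))
    (by positivity) fun v => ?_
  rw [RCLike.re_to_real, sub_apply, inner_sub_left, abs_sub_le_iff]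
  exact ⟨inner_normSmulSelfDeriv_sub_le x y v,
    norm_sub_rev x y ▸ inner_normSmulSelfDeriv_sub_le y x v⟩

lemma hasFDerivAt_norm {x : E} (hx : x ≠ 0) :
    HasFDerivAt (‖·‖) (‖x‖⁻¹ • innerSL ℝ x) x := by
  have h := (hasStrictFDerivAt_norm_sq x).hasFDerivAt.sqrt (by positivity)
  simp only [Real.sqrt_sq (norm_nonneg _)] at h
  convert h using 1
  ext v
  simp
  field_simp

lemma hasFDerivAt_norm_smul_self (x : E) :
    HasFDerivAt (fun y : E => ‖y‖ • y) (normSmulSelfDeriv x) x := by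
  rcases eq_or_ne x 0 with rfl | hx
  · refine .of_isLittleO ?_
    rw [← Asymptotics.isLittleO_norm_left]
    simpa [norm_smul, sq] using Asymptotics.isLittleO_norm_pow_id (E' := E) one_lt_two
  · refine ((hasFDerivAt_norm hx).smul (hasFDerivAt_id x)).congr_fderiv ?_
    ext v
    simp [normSmulSelfDeriv_apply]

lemma hasGradientAt_mul_norm_pow_three [CompleteSpace E] (c : ℝ) (x : E) :
    HasGradientAt (fun y : E => c / 3 * ‖y‖ ^ 3) (c • ‖x‖ • x) x := by
  have h := (hasFDerivAt_norm_rpow x (by norm_num : (1 : ℝ) < 3)).const_mul (c / 3)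
  norm_num at h
  rw [hasGradientAt_iff_hasFDerivAt]
  refine h.congr_fderiv ?_
  ext v
  simp
  ring

end NormSmulSelf

/-- for `f(x) = (H/3)‖x‖³`, `f` is twice differentiable, its
Hessian is `2H`-Lipschitz in operator norm, and the vanishing directional
curvature bound holds with constant `4H`. -/
theorem iso_cubic_properties {d : ℕ} (H : ℝ) (hH : 0 < H)
    (f : EuclideanSpace ℝ (Fin d) → ℝ)
    (hf : ∀ x, f x = (H/3) * ‖x‖^3) :
    (Differentiable ℝ f ∧ Differentiable ℝ (gradient f)) ∧
    (∀ x y : EuclideanSpace ℝ (Fin d),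
      ‖fderiv ℝ (gradient f) x - fderiv ℝ (gradient f) y‖ ≤ 2 * H * ‖x - y‖) ∧
    (∀ x : EuclideanSpace ℝ (Fin d),
      ⟪gradient f x, fderiv ℝ (gradient f) x (gradient f x)⟫
        ≤ Real.sqrt (4*H) * ‖gradient f x‖ ^ ((5:ℝ)/2)) := by
  obtain rfl : f = fun x => H / 3 * ‖x‖ ^ 3 := funext hf
  have hgrad : gradient (fun x : EuclideanSpace ℝ (Fin d) => H / 3 * ‖x‖ ^ 3) =
      fun x => H • ‖x‖ • x := gradient_eq (hasGradientAt_mul_norm_pow_three H)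
  have hhess x : HasFDerivAt (fun x : EuclideanSpace ℝ (Fin d) => H • ‖x‖ • x)
      (H • normSmulSelfDeriv x) x := (hasFDerivAt_norm_smul_self x).const_smul H
  rw [hgrad]
  refine ⟨⟨fun x => (hasGradientAt_mul_norm_pow_three H x).differentiableAt,
    fun x => (hhess x).differentiableAt⟩, fun x y => ?_, fun x => ?_⟩
  · rw [(hhess x).fderiv, (hhess y).fderiv]
    calc ‖H • normSmulSelfDeriv x - H • normSmulSelfDeriv y‖
        = H * ‖normSmulSelfDeriv x - normSmulSelfDeriv y‖ := by
          rw [← smul_sub, norm_smul, Real.norm_of_nonneg hH.le]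
      _ ≤ H * (2 * ‖x - y‖) := by gcongr; exact norm_normSmulSelfDeriv_sub_le x y
      _ = 2 * H * ‖x - y‖ := by ring
  · have hnorm : ‖H • ‖x‖ • x‖ = H * ‖x‖ ^ 2 := by
      rw [norm_smul, norm_smul, norm_norm, Real.norm_of_nonneg hH.le, sq]
    have hform : ⟪H • ‖x‖ • x, (H • normSmulSelfDeriv x) (H • ‖x‖ • x)⟫ =
        2 * H ^ 3 * ‖x‖ ^ 5 := by
      simp only [smul_apply, map_smul, normSmulSelfDeriv_apply_self,
        real_inner_smul_left, real_inner_smul_right, real_inner_self_eq_norm_sq]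
      ring
    rw [(hhess x).fderiv, hform, hnorm, sqrt_four_mul_mul_mul_sq_rpow hH.le (norm_nonneg x)]
end

section
/- Let H_1, …, H_d > 0, let H_max = max_i H_i, and let f : ℝ^d → ℝ be given by f(x) = Σ_{i=1}^d (H_i/3)·|x_i|³. Then f is twice differentiable, its Hessian is 2H_max-Lipschitz in operator norm, i.e., ‖∇²f(x) − ∇²f(y)‖ ≤ 2H_max·‖x − y‖ for all x, y ∈ ℝ^d, and for every x ∈ ℝ^d: ⟨∇f(x), ∇²f(x)∇f(x)⟩ ≤ 2√(H_max) · ‖∇f(x)‖^{5/2}. -/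
/-!
The function is separable, so its gradient is `(Hᵢ xᵢ|xᵢ|)ᵢ` and its Hessian is the diagonal
operator `diag (2Hᵢ|xᵢ|)`, whose operator norm is the largest modulus of an entry. Lipschitz
continuity of the Hessian is then the entrywise bound `2Hᵢ ||xᵢ| - |yᵢ|| ≤ 2Hmax ‖x - y‖`.
For the curvature bound, each Hessian entry is `2Hᵢ|xᵢ| = 2√(Hᵢ |∇ᵢf(x)|) ≤ 2√(Hmax ‖∇f(x)‖)`,
hence `⟪∇f, ∇²f ∇f⟫ ≤ 2√(Hmax ‖∇f‖) ‖∇f‖²`.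
-/

open scoped RealInnerProductSpace
open Matrix WithLp Asymptotics

theorem hasDerivAt_mul_abs (t : ℝ) : HasDerivAt (fun s : ℝ => s * |s|) (2 * |t|) t := by
  rcases eq_or_ne t 0 with rfl | ht
  · rw [hasDerivAt_iff_isLittleO_nhds_zero]
    refine IsLittleO.of_norm_left ((isLittleO_norm_pow_id (E' := ℝ) one_lt_two).congr_left ?_)
    simp [sq]
  · refine ((hasDerivAt_id' t).mul (hasDerivAt_abs ht)).congr_deriv ?_
    rw [self_mul_sign]
    ring

theorem hasDerivAt_abs_pow_three (t : ℝ) :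
    HasDerivAt (fun s : ℝ => |s| ^ 3) (3 * (t * |t|)) t := by
  have hcube : (fun s : ℝ => |s| ^ 3) = fun s => s * (s * |s|) := by
    ext s
    rw [pow_succ, pow_two, abs_mul_abs_self, mul_assoc]
  rw [hcube]
  exact ((hasDerivAt_id' t).mul (hasDerivAt_mul_abs t)).congr_deriv (by ring)

variable {ι : Type*} [Fintype ι]

theorem hasGradientAt_sum_apply {φ : ι → ℝ → ℝ} {g : ι → ℝ} {x : EuclideanSpace ℝ ι}
    (h : ∀ i, HasDerivAt (φ i) (g i) (x i)) :
    HasGradientAt (fun y : EuclideanSpace ℝ ι => ∑ i, φ i (y i)) (toLp 2 g) x := by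
  rw [hasGradientAt_iff_hasFDerivAt]
  refine (HasFDerivAt.fun_sum fun i _ => (h i).comp_hasFDerivAt x
    (EuclideanSpace.proj i : EuclideanSpace ℝ ι →L[ℝ] ℝ).hasFDerivAt).congr_fderiv ?_
  ext v
  simp [PiLp.inner_apply, mul_comm]

theorem hasFDerivAt_toLp_apply [DecidableEq ι] {φ : ι → ℝ → ℝ} {c : ι → ℝ}
    {x : EuclideanSpace ℝ ι} (h : ∀ i, HasDerivAt (φ i) (c i) (x i)) :
    HasFDerivAt (fun y : EuclideanSpace ℝ ι => toLp 2 fun i => φ i (y i))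
      (toEuclideanCLM (𝕜 := ℝ) (diagonal c)) x := by
  have hpi := hasFDerivAt_pi.2 fun i => (h i).comp_hasFDerivAt x
    (EuclideanSpace.proj i : EuclideanSpace ℝ ι →L[ℝ] ℝ).hasFDerivAt
  refine ((EuclideanSpace.equiv ι ℝ).symm.hasFDerivAt.comp x hpi).congr_fderiv ?_
  ext v i
  simp [mulVec_diagonal]

theorem norm_toEuclideanCLM_diagonal {𝕜 : Type*} [RCLike 𝕜] [DecidableEq ι] (c : ι → 𝕜) :
    ‖toEuclideanCLM (𝕜 := 𝕜) (diagonal c)‖ = ‖c‖ := by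
  open scoped Matrix.Norms.L2Operator in
  rw [l2_opNorm_toEuclideanCLM, l2_opNorm_diagonal]

theorem inner_toEuclideanCLM_diagonal_self_le [DecidableEq ι] {c : ι → ℝ} {K : ℝ}
    (h : ∀ i, c i ≤ K) (v : EuclideanSpace ℝ ι) :
    ⟪v, toEuclideanCLM (𝕜 := ℝ) (diagonal c) v⟫ ≤ K * ‖v‖ ^ 2 := by
  rw [inner_toEuclideanCLM, EuclideanSpace.norm_sq_eq, Finset.mul_sum]
  refine Finset.sum_le_sum fun i _ => ?_
  rw [mulVec_diagonal, Real.norm_eq_abs, sq_abs, mul_left_comm, ← sq]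
  exact mul_le_mul_of_nonneg_right (h i) (sq_nonneg _)

theorem mul_abs_le_sqrt_mul_sqrt {h h' t G : ℝ} (hh : 0 ≤ h) (hh' : h ≤ h')
    (hG : |h * (t * |t|)| ≤ G) : h * |t| ≤ √h' * √G :=
  calc h * |t| = √(h * |h * (t * |t|)|) := by
        rw [← Real.sqrt_sq (by positivity : 0 ≤ h * |t|), abs_mul, abs_mul, abs_abs,
          abs_of_nonneg hh]
        ring_nf
    _ ≤ √(h' * G) := Real.sqrt_le_sqrt (mul_le_mul hh' hG (abs_nonneg _) (hh.trans hh'))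
    _ = √h' * √G := Real.sqrt_mul (hh.trans hh') G

theorem abs_mul_abs_sub_mul_abs_le {c c' s t r : ℝ} (hc : 0 ≤ c) (hc' : c ≤ c')
    (hst : |s - t| ≤ r) : |(c * |s| - c * |t|)| ≤ c' * r := by
  rw [← mul_sub, abs_mul, abs_of_nonneg hc]
  exact mul_le_mul hc' ((abs_abs_sub_abs_le_abs_sub s t).trans hst) (abs_nonneg _)
    (hc.trans hc')

theorem sqrt_mul_sq_eq_rpow {a : ℝ} (ha : 0 ≤ a) : √a * a ^ 2 = a ^ ((5 : ℝ) / 2) := by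
  rw [Real.sqrt_eq_rpow, ← Real.rpow_natCast, ← Real.rpow_add' ha (by norm_num)]
  norm_num

/-- for the separable cubic `f(x) = Σᵢ (Hᵢ/3)|xᵢ|³`, `f` is twice
differentiable, its Hessian is `2·Hmax`-Lipschitz in operator norm, and the
vanishing directional curvature bound holds with constant `4·Hmax`. -/
theorem separable_cubic_properties {d : ℕ} (H : Fin d → ℝ) (hH : ∀ i, 0 < H i)
    (Hmax : ℝ) (hle : ∀ i, H i ≤ Hmax) (hmem : ∃ i, Hmax = H i)
    (f : EuclideanSpace ℝ (Fin d) → ℝ)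
    (hf : ∀ x, f x = ∑ i, (H i / 3) * |x i|^3) :
    (Differentiable ℝ f ∧ Differentiable ℝ (gradient f)) ∧
    (∀ x y : EuclideanSpace ℝ (Fin d),
      ‖fderiv ℝ (gradient f) x - fderiv ℝ (gradient f) y‖ ≤ 2 * Hmax * ‖x - y‖) ∧
    (∀ x : EuclideanSpace ℝ (Fin d),
      ⟪gradient f x, fderiv ℝ (gradient f) x (gradient f x)⟫
        ≤ 2 * Real.sqrt Hmax * ‖gradient f x‖ ^ ((5:ℝ)/2)) := by
  obtain ⟨i₀, hi₀⟩ := hmem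
  have hHmax : 0 ≤ Hmax := hi₀ ▸ (hH i₀).le
  obtain rfl : f = _ := funext hf
  set g : EuclideanSpace ℝ (Fin d) → EuclideanSpace ℝ (Fin d) :=
    fun x => toLp 2 fun i => H i * (x i * |x i|)
  have hgrad (x) : HasGradientAt _ (g x) x := hasGradientAt_sum_apply fun i =>
    ((hasDerivAt_abs_pow_three (x i)).const_mul (H i / 3)).congr_deriv (by ring)
  have hgrad_eq : gradient _ = g := funext fun x => (hgrad x).gradient
  have hhess (x) : HasFDerivAt g (toEuclideanCLM (𝕜 := ℝ)
      (diagonal fun i => 2 * H i * |x i|)) x := hasFDerivAt_toLp_apply fun i =>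
    ((hasDerivAt_mul_abs (x i)).const_mul (H i)).congr_deriv (by ring)
  have hfderiv (x) : fderiv ℝ (gradient _) x = _ := hgrad_eq ▸ (hhess x).fderiv
  refine ⟨⟨fun x => (hgrad x).differentiableAt, hgrad_eq ▸ fun x => (hhess x).differentiableAt⟩,
    fun x y => ?_, fun x => ?_⟩
  · rw [hfderiv, hfderiv, ← map_sub, diagonal_sub, norm_toEuclideanCLM_diagonal]
    exact (pi_norm_le_iff_of_nonneg (by positivity)).2 fun i =>
      abs_mul_abs_sub_mul_abs_le (by linarith [hH i]) (by linarith [hle i])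
        (PiLp.norm_apply_le (x - y) i)
  · rw [hfderiv, hgrad_eq]
    have hentry (i) : 2 * H i * |x i| ≤ 2 * √Hmax * √‖g x‖ := by
      rw [mul_assoc, mul_assoc]
      gcongr 2 * ?_
      exact mul_abs_le_sqrt_mul_sqrt (hH i).le (hle i) (PiLp.norm_apply_le (g x) i)
    calc _ ≤ 2 * √Hmax * √‖g x‖ * ‖g x‖ ^ 2 := inner_toEuclideanCLM_diagonal_self_le hentry _
      _ = 2 * √Hmax * ‖g x‖ ^ ((5:ℝ)/2) := by rw [mul_assoc, sqrt_mul_sq_eq_rpow (norm_nonneg _)]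
end

section
/- Let a ∈ ℝ^d with a ≠ 0 and let f : ℝ^d → ℝ be given by f(x) = log(1 + exp(−⟨a, x⟩)). Then f is twice differentiable, its Hessian is (‖a‖³/(6√3))-Lipschitz in operator norm, i.e., ‖∇²f(x) − ∇²f(y)‖ ≤ (‖a‖³/(6√3))·‖x − y‖ for all x, y ∈ ℝ^d, and for every x ∈ ℝ^d: ⟨∇f(x), ∇²f(x)∇f(x)⟩ / ‖∇f(x)‖² ≤ √((4/27)·‖a‖³ · ‖∇f(x)‖). -/
/-!
With `s = ⟪a, x⟫`, `f x = φ s` for `φ t = log (1 + e^{-t})`, whose derivatives are `φ' = σ - 1`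
and `φ'' = σ' = σ (1 - σ)`. Hence `∇f x = (σ s - 1) • a` and `∇²f x = σ'(s) • (a ⊗ a)`, and
both claims become one-variable inequalities for `p = σ s ∈ (0, 1)`:
`σ'' = p (1 - p) (1 - 2p) = u (1 - u²) / 4` with `u = 1 - 2p` is at most `1 / (6√3)` in absolute
value (extremal at `u = 1/√3`), which bounds the Lipschitz constant of `∇²f` by `‖a‖³/(6√3)`;
and the Rayleigh quotient of `∇²f x` at `∇f x` is `σ'(s) ‖a‖²`, whose square is at most
`(4/27) (1 - p) ‖a‖⁴ = (4/27) ‖a‖³ ‖∇f x‖` because `p² (1 - p) ≤ 4/27` (extremal at `p = 2/3`).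
-/

open scoped RealInnerProductSpace

theorem abs_mul_one_sub_sq_le (u : ℝ) : |u| * (1 - u ^ 2) ≤ 2 / (3 * √3) := by
  have hc : √3 ^ 2 = 3 := Real.sq_sqrt (by norm_num)
  rw [le_div_iff₀ (by positivity), ← sq_abs u]
  -- `(√3 v - 1)² (√3 v + 2) = 3√3 v³ - 3√3 v + 2` vanishes doubly at `v = 1/√3`
  linear_combination mul_nonneg (sq_nonneg (√3 * |u| - 1)) (by positivity : 0 ≤ √3 * |u| + 2)
    + √3 * |u| ^ 3 * hc

theorem sq_mul_one_sub_le {p : ℝ} (hp : 0 ≤ p) : p ^ 2 * (1 - p) ≤ 4 / 27 := by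
  nlinarith [mul_nonneg (sq_nonneg (p - 2 / 3)) hp]

namespace Real

theorem hasDerivAt_log_one_add_exp_neg (t : ℝ) :
    HasDerivAt (fun t => log (1 + exp (-t))) (sigmoid t - 1) t := by
  convert ((hasDerivAt_neg' t).exp.const_add 1).log (by positivity) using 1
  rw [sigmoid_def]
  field_simp
  ring

theorem hasDerivAt_sigmoid_mul_one_sub (t : ℝ) :
    HasDerivAt (fun t => sigmoid t * (1 - sigmoid t))
      (sigmoid t * (1 - sigmoid t) * (1 - 2 * sigmoid t)) t :=
  ((hasDerivAt_sigmoid t).mul ((hasDerivAt_sigmoid t).const_sub 1)).congr_deriv (by ring)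

theorem abs_sigmoid_mul_one_sub_mul_le (t : ℝ) :
    |sigmoid t * (1 - sigmoid t) * (1 - 2 * sigmoid t)| ≤ 1 / (6 * √3) := by
  have h := abs_mul_one_sub_sq_le (1 - 2 * sigmoid t)
  have hw : 0 ≤ sigmoid t * (1 - sigmoid t) :=
    mul_nonneg (sigmoid_nonneg t) (sub_nonneg.2 (sigmoid_le_one t))
  rw [abs_mul, abs_of_nonneg hw]
  calc sigmoid t * (1 - sigmoid t) * |1 - 2 * sigmoid t|
      = |1 - 2 * sigmoid t| * (1 - (1 - 2 * sigmoid t) ^ 2) / 4 := by ring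
    _ ≤ 2 / (3 * √3) / 4 := by gcongr
    _ = 1 / (6 * √3) := by ring

theorem abs_sigmoid_mul_one_sub_sub_le (s t : ℝ) :
    |sigmoid s * (1 - sigmoid s) - sigmoid t * (1 - sigmoid t)| ≤ 1 / (6 * √3) * |s - t| := by
  simpa only [norm_eq_abs] using Convex.norm_image_sub_le_of_norm_hasDerivWithin_le
    (fun u _ => (hasDerivAt_sigmoid_mul_one_sub u).hasDerivWithinAt)
    (fun u _ => by simpa only [norm_eq_abs] using abs_sigmoid_mul_one_sub_mul_le u)
    convex_univ (Set.mem_univ t) (Set.mem_univ s)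

theorem sigmoid_mul_one_sub_sq_le (t : ℝ) :
    (sigmoid t * (1 - sigmoid t)) ^ 2 ≤ 4 / 27 * (1 - sigmoid t) := by
  have h := sq_mul_one_sub_le (sigmoid_nonneg t)
  have h1 : 0 ≤ 1 - sigmoid t := sub_nonneg.2 (sigmoid_le_one t)
  calc (sigmoid t * (1 - sigmoid t)) ^ 2 = sigmoid t ^ 2 * (1 - sigmoid t) * (1 - sigmoid t) := by
        ring
    _ ≤ 4 / 27 * (1 - sigmoid t) := by gcongr

end Real

section RidgeFunction

variable {E F : Type*} [NormedAddCommGroup E] [InnerProductSpace ℝ E]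
  [NormedAddCommGroup F] [NormedSpace ℝ F] {g : ℝ → ℝ} {g' : ℝ} {a x : E}

theorem HasDerivAt.hasGradientAt_comp_inner [CompleteSpace E] (hg : HasDerivAt g g' ⟪a, x⟫) :
    HasGradientAt (fun x => g ⟪a, x⟫) (g' • a) x := by
  rw [hasGradientAt_iff_hasFDerivAt]
  refine (hg.comp_hasFDerivAt x (innerSL ℝ a).hasFDerivAt).congr_fderiv ?_
  ext v
  simp

theorem HasDerivAt.hasFDerivAt_smul_comp_inner (hg : HasDerivAt g g' ⟪a, x⟫) (b : F) :
    HasFDerivAt (fun x => g ⟪a, x⟫ • b) (g' • (innerSL ℝ a).smulRight b) x := by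
  refine ((hg.comp_hasFDerivAt x (innerSL ℝ a).hasFDerivAt).smul_const b).congr_fderiv ?_
  ext v
  simp [smul_smul]

theorem inner_smul_smulRight_self_div_norm_sq (k : ℝ) {c : ℝ} (hc : c ≠ 0) (ha : a ≠ 0) :
    ⟪c • a, (k • (innerSL ℝ a).smulRight a) (c • a)⟫ / ‖c • a‖ ^ 2 = k * ‖a‖ ^ 2 := by
  have ha' : ‖a‖ ≠ 0 := norm_ne_zero_iff.2 ha
  simp only [smul_apply, ContinuousLinearMap.smulRight_apply,
    innerSL_apply_apply, real_inner_smul_left, real_inner_smul_right, real_inner_self_eq_norm_sq,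
    norm_smul, Real.norm_eq_abs, mul_pow, sq_abs]
  field_simp

end RidgeFunction

section LogisticLoss

open Real

variable {E : Type*} [NormedAddCommGroup E] [InnerProductSpace ℝ E] (a : E)

theorem hasGradientAt_log_one_add_exp_neg_inner [CompleteSpace E] (x : E) :
    HasGradientAt (fun x => log (1 + exp (-⟪a, x⟫))) ((sigmoid ⟪a, x⟫ - 1) • a) x :=
  (hasDerivAt_log_one_add_exp_neg _).hasGradientAt_comp_inner

theorem gradient_log_one_add_exp_neg_inner [CompleteSpace E] :
    gradient (fun x => log (1 + exp (-⟪a, x⟫))) = fun x => (sigmoid ⟪a, x⟫ - 1) • a :=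
  funext fun x => (hasGradientAt_log_one_add_exp_neg_inner a x).gradient

theorem hasFDerivAt_gradient_log_one_add_exp_neg_inner [CompleteSpace E] (x : E) :
    HasFDerivAt (gradient (fun x => log (1 + exp (-⟪a, x⟫))))
      ((sigmoid ⟪a, x⟫ * (1 - sigmoid ⟪a, x⟫)) • (innerSL ℝ a).smulRight a) x := by
  rw [gradient_log_one_add_exp_neg_inner]
  exact ((hasDerivAt_sigmoid _).sub_const 1).hasFDerivAt_smul_comp_inner a

theorem norm_sigmoid_hessian_sub_le (x y : E) :
    ‖(sigmoid ⟪a, x⟫ * (1 - sigmoid ⟪a, x⟫)) • (innerSL ℝ a).smulRight a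
      - (sigmoid ⟪a, y⟫ * (1 - sigmoid ⟪a, y⟫)) • (innerSL ℝ a).smulRight a‖
      ≤ ‖a‖ ^ 3 / (6 * √3) * ‖x - y‖ := by
  rw [← sub_smul, norm_smul, ContinuousLinearMap.norm_smulRight_apply, innerSL_apply_norm,
    norm_eq_abs]
  have hinner : |⟪a, x⟫ - ⟪a, y⟫| ≤ ‖a‖ * ‖x - y‖ := by
    rw [← inner_sub_right]
    exact abs_real_inner_le_norm a (x - y)
  calc _ ≤ 1 / (6 * √3) * (‖a‖ * ‖x - y‖) * (‖a‖ * ‖a‖) := by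
        gcongr
        exact (abs_sigmoid_mul_one_sub_sub_le _ _).trans (by gcongr)
    _ = ‖a‖ ^ 3 / (6 * √3) * ‖x - y‖ := by ring

theorem sigmoid_mul_one_sub_mul_norm_sq_le_sqrt (t : ℝ) :
    sigmoid t * (1 - sigmoid t) * ‖a‖ ^ 2
      ≤ √(4 / 27 * ‖a‖ ^ 3 * ‖(sigmoid t - 1) • a‖) := by
  have h1 : 0 ≤ 1 - sigmoid t := sub_nonneg.2 (sigmoid_le_one t)
  rw [norm_smul, norm_eq_abs, abs_sub_comm, abs_of_nonneg h1,
    le_sqrt (by have := sigmoid_nonneg t; positivity) (by positivity)]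
  calc (sigmoid t * (1 - sigmoid t) * ‖a‖ ^ 2) ^ 2
      = (sigmoid t * (1 - sigmoid t)) ^ 2 * ‖a‖ ^ 4 := by ring
    _ ≤ 4 / 27 * (1 - sigmoid t) * ‖a‖ ^ 4 := by gcongr; exact sigmoid_mul_one_sub_sq_le t
    _ = 4 / 27 * ‖a‖ ^ 3 * ((1 - sigmoid t) * ‖a‖) := by ring

end LogisticLoss

/-- the logistic function `f(x) = log(1 + e^{−⟨a,x⟩})` is twice
differentiable, has `‖a‖³/(6√3)`-Lipschitz Hessian, and satisfies the
vanishing directional curvature bound with constant `(4/27)‖a‖³`. -/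
theorem logistic_properties {d : ℕ} (a : EuclideanSpace ℝ (Fin d)) (ha : a ≠ 0)
    (f : EuclideanSpace ℝ (Fin d) → ℝ)
    (hf : ∀ x, f x = Real.log (1 + Real.exp (-⟪a, x⟫))) :
    (Differentiable ℝ f ∧ Differentiable ℝ (gradient f)) ∧
    (∀ x y : EuclideanSpace ℝ (Fin d),
      ‖fderiv ℝ (gradient f) x - fderiv ℝ (gradient f) y‖
        ≤ (‖a‖^3 / (6 * Real.sqrt 3)) * ‖x - y‖) ∧
    (∀ x : EuclideanSpace ℝ (Fin d),
      ⟪gradient f x, fderiv ℝ (gradient f) x (gradient f x)⟫ / ‖gradient f x‖^2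
        ≤ Real.sqrt ((4/27) * ‖a‖^3 * ‖gradient f x‖)) := by
  obtain rfl : f = fun x => Real.log (1 + Real.exp (-⟪a, x⟫)) := funext hf
  have hessian x := (hasFDerivAt_gradient_log_one_add_exp_neg_inner a x).fderiv
  refine ⟨⟨fun x => (hasGradientAt_log_one_add_exp_neg_inner a x).differentiableAt,
      fun x => (hasFDerivAt_gradient_log_one_add_exp_neg_inner a x).differentiableAt⟩,
    fun x y => ?_, fun x => ?_⟩
  · rw [hessian, hessian]
    exact norm_sigmoid_hessian_sub_le a x y
  · rw [hessian, gradient_log_one_add_exp_neg_inner,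
      inner_smul_smulRight_self_div_norm_sq _ (sub_ne_zero.2 (Real.sigmoid_lt_one _).ne) ha]
    exact sigmoid_mul_one_sub_mul_norm_sq_le_sqrt a _
end

section
/- For all real s: σ(s)·σ(−s) ≤ (2/(3√3))·√(log(1 + e^{−s})), where σ(t) = 1/(1+e^{−t}). -/
/-!
Write `p = σ(-s)`, so that `σ(s) = 1 - p` and `log (1 + e^{-s}) = -log (1 - p) ≥ p`. It then
suffices that `(1 - p) p ≤ (2 / (3√3)) √p`, i.e. `p (1 - p)² ≤ 4/27`, whose maximum over `[0, 1]`
is attained at `p = 1/3`.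
-/

namespace Real

lemma mul_one_sub_sq_le_four_div_twentySeven {p : ℝ} (hp : p ≤ 4 / 3) :
    p * (1 - p) ^ 2 ≤ 4 / 27 := by
  -- `4/27 - p (1 - p)² = (3p - 1)² (4 - 3p) / 27`
  nlinarith [mul_nonneg (sq_nonneg (3 * p - 1)) (sub_nonneg.2 hp)]

lemma two_div_three_mul_sqrt_three : 2 / (3 * √3) = √(4 / 27) := by
  rw [show (4 : ℝ) / 27 = 2 ^ 2 / (3 ^ 2 * 3) by norm_num, sqrt_div' _ (by positivity),
    sqrt_mul (by positivity), sqrt_sq zero_le_two, sqrt_sq zero_le_three]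

lemma one_sub_mul_le_sqrt {p : ℝ} (hp₀ : 0 ≤ p) (hp : p ≤ 4 / 3) :
    (1 - p) * p ≤ 2 / (3 * √3) * √p := by
  rw [two_div_three_mul_sqrt_three, ← sqrt_mul (by norm_num)]
  refine (le_abs_self _).trans (abs_le_sqrt ?_)
  nlinarith [mul_le_mul_of_nonneg_left (mul_one_sub_sq_le_four_div_twentySeven hp) hp₀]

lemma sigmoid_neg_le_log_one_add_exp_neg (s : ℝ) : sigmoid (-s) ≤ log (1 + exp (-s)) := by
  have h := one_sub_inv_le_log_of_pos (x := 1 + exp (-s)) (by positivity)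
  rwa [← sigmoid_def, ← sigmoid_neg] at h

lemma sigmoid_mul_sigmoid_neg_le_sqrt_log (s : ℝ) :
    sigmoid s * sigmoid (-s) ≤ 2 / (3 * √3) * √(log (1 + exp (-s))) :=
  calc sigmoid s * sigmoid (-s) = (1 - sigmoid (-s)) * sigmoid (-s) := by
        rw [sigmoid_neg, sub_sub_cancel]
    _ ≤ 2 / (3 * √3) * √(sigmoid (-s)) :=
        one_sub_mul_le_sqrt (sigmoid_nonneg _) (by linarith [sigmoid_le_one (-s)])
    _ ≤ 2 / (3 * √3) * √(log (1 + exp (-s))) := by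
        gcongr
        exact sigmoid_neg_le_log_one_add_exp_neg s

end Real

/-- scalar logistic bound
`σ(s)σ(−s) ≤ (2/(3√3))√(log(1 + e^{−s}))` where `σ(t) = 1/(1+e^{−t})`. -/
theorem sigmoid_product_le_sqrt_log (σ : ℝ → ℝ)
    (hσ : ∀ t, σ t = 1 / (1 + Real.exp (-t))) :
    ∀ s : ℝ, σ s * σ (-s)
      ≤ (2 / (3 * Real.sqrt 3)) * Real.sqrt (Real.log (1 + Real.exp (-s))) := by
  obtain rfl : σ = Real.sigmoid := funext fun t ↦ by rw [hσ, one_div, Real.sigmoid_def]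
  exact Real.sigmoid_mul_sigmoid_neg_le_sqrt_log
end

section
/- Let a_1, …, a_n ∈ ℝ^d and y_1, …, y_n ∈ {−1, 1}, and suppose the data are linearly separable: there exist v ∈ ℝ^d and γ > 0 with y_i·⟨a_i, v⟩ ≥ γ for all i. Let f(x) = (1/n)·Σ_{i=1}^n log(1 + exp(−y_i·⟨a_i, x⟩)). Then inf f = 0 and for every x ∈ ℝ^d with ∇f(x) ≠ 0: ⟨∇f(x), ∇²f(x)∇f(x)⟩ / ‖∇f(x)‖² ≤ (2/(3√3))·((1/n)·Σ_{i=1}^n ‖a_i‖⁴)^{1/2}·√(f(x)). -/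
/-!
Put `bᵢ = -yᵢ aᵢ`, so that `f x = (1/n) Σ ℓ ⟪bᵢ, x⟫` with `ℓ t = log (1 + eᵗ)`. The Hessian is
`(1/n) Σ σ(tᵢ) σ(-tᵢ) bᵢ bᵢᵀ`, so the curvature along any direction is at most
`(1/n) Σ σ(tᵢ) σ(-tᵢ) ‖bᵢ‖²`. With `p = σ(t)` one has `ℓ t = -log (1 - p) ≥ p`, and
`p (1 - p) ≤ (2/(3√3)) √p` because `s (1 - s²)` peaks at `s = 1/√3`; hence
`σ(t) σ(-t) ≤ (2/(3√3)) √(ℓ t)`, and Cauchy–Schwarz over `i` gives the bound.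
Separability makes every margin `⟪bᵢ, t v⟫ ≤ -tγ`, so `f (t v) ≤ e^{-tγ} → 0`.
-/

open scoped RealInnerProductSpace

open Real

lemma mul_one_sub_sq_le_of_nonneg {s : ℝ} (hs : 0 ≤ s) : s * (1 - s ^ 2) ≤ 2 / (3 * √3) := by
  have h3 : √3 ^ 2 = 3 := sq_sqrt (by norm_num)
  rw [le_div_iff₀ (by positivity)]
  have hfactor : 2 - s * (1 - s ^ 2) * (3 * √3) = (√3 * s - 1) ^ 2 * (√3 * s + 2) := by
    linear_combination (-(s ^ 3) * √3) * h3
  nlinarith [mul_nonneg (sq_nonneg (√3 * s - 1)) (by positivity : 0 ≤ √3 * s + 2)]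

lemma mul_one_sub_le_sqrt {p : ℝ} (hp : 0 ≤ p) : p * (1 - p) ≤ 2 / (3 * √3) * √p := by
  have hsq : √p ^ 2 = p := sq_sqrt hp
  calc p * (1 - p) = √p * (√p * (1 - √p ^ 2)) := by rw [hsq, ← mul_assoc, ← sq, hsq]
    _ ≤ √p * (2 / (3 * √3)) :=
        mul_le_mul_of_nonneg_left (mul_one_sub_sq_le_of_nonneg (sqrt_nonneg p)) (sqrt_nonneg p)
    _ = 2 / (3 * √3) * √p := mul_comm _ _

lemma sigmoid_le_log_one_add_exp (t : ℝ) : sigmoid t ≤ log (1 + exp t) := by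
  have h := one_sub_inv_le_log_of_pos (by positivity : 0 < 1 + exp t)
  rwa [← neg_neg t, ← sigmoid_def, neg_neg, ← sigmoid_neg, neg_neg] at h

lemma sigmoid_mul_sigmoid_neg_le (t : ℝ) :
    sigmoid t * sigmoid (-t) ≤ 2 / (3 * √3) * √(log (1 + exp t)) := by
  rw [sigmoid_neg]
  exact (mul_one_sub_le_sqrt (sigmoid_nonneg t)).trans <| by
    gcongr; exact sigmoid_le_log_one_add_exp t

lemma hasDerivAt_log_one_add_exp (t : ℝ) :
    HasDerivAt (fun t => log (1 + exp t)) (sigmoid t) t := by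
  convert ((hasDerivAt_exp t).const_add 1).log (by positivity) using 1
  rw [sigmoid_def, exp_neg]
  field_simp
  ring

lemma log_one_add_exp_nonneg (t : ℝ) : 0 ≤ log (1 + exp t) :=
  log_nonneg (by linarith [exp_pos t])

lemma log_one_add_exp_le_exp (t : ℝ) : log (1 + exp t) ≤ exp t :=
  (log_le_sub_one_of_pos (by positivity)).trans_eq (by ring)

lemma mul_sum_mul_le_sqrt_mul_sqrt {ι : Type*} (s : Finset ι) {c : ℝ} (hc : 0 ≤ c)
    (f g : ι → ℝ) :
    c * ∑ i ∈ s, f i * g i ≤ √(c * ∑ i ∈ s, f i ^ 2) * √(c * ∑ i ∈ s, g i ^ 2) := by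
  rw [sqrt_mul hc, sqrt_mul hc, mul_mul_mul_comm, mul_self_sqrt hc]
  exact mul_le_mul_of_nonneg_left (sum_mul_le_sqrt_mul_sqrt s f g) hc

section LogisticLoss

variable {E : Type*} [NormedAddCommGroup E] [InnerProductSpace ℝ E]

open InnerProductSpace

lemma hasFDerivAt_comp_inner {φ : ℝ → ℝ} {φ' : ℝ} (b x : E) (hφ : HasDerivAt φ φ' ⟪b, x⟫) :
    HasFDerivAt (fun x => φ ⟪b, x⟫) (φ' • innerSL ℝ b) x :=
  hφ.comp_hasFDerivAt x (innerSL ℝ b).hasFDerivAt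

lemma hasFDerivAt_comp_inner_smul {φ : ℝ → ℝ} {φ' : ℝ} (b x : E)
    (hφ : HasDerivAt φ φ' ⟪b, x⟫) :
    HasFDerivAt (fun x => φ ⟪b, x⟫ • b) (φ' • rankOne ℝ b b) x := by
  convert (hasFDerivAt_comp_inner b x hφ).smul_const b using 1
  ext z
  simp [smul_smul]

/-- The empirical logistic loss with the labels absorbed into the data, `bᵢ = -yᵢ aᵢ`. -/
noncomputable def logisticLoss {n : ℕ} (b : Fin n → E) (x : E) : ℝ :=
  (1 / (n : ℝ)) * ∑ i, log (1 + exp ⟪b i, x⟫)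

variable {n : ℕ} (b : Fin n → E)

lemma logisticLoss_nonneg (x : E) : 0 ≤ logisticLoss b x :=
  mul_nonneg (by positivity) (Finset.sum_nonneg fun i _ => log_one_add_exp_nonneg _)

lemma hasFDerivAt_logisticLoss (x : E) :
    HasFDerivAt (logisticLoss b) ((1 / (n : ℝ)) • ∑ i, sigmoid ⟪b i, x⟫ • innerSL ℝ (b i)) x :=
  (HasFDerivAt.fun_sum fun i _ =>
    hasFDerivAt_comp_inner (b i) x (hasDerivAt_log_one_add_exp _)).const_mul _

lemma logisticLoss_le_exp_neg {x : E} {m : ℝ} (hm : ∀ i, ⟪b i, x⟫ ≤ -m) :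
    logisticLoss b x ≤ exp (-m) := by
  calc logisticLoss b x ≤ (1 / (n : ℝ)) * ∑ _i : Fin n, exp (-m) := by
        unfold logisticLoss
        gcongr with i
        exact (log_one_add_exp_le_exp _).trans (exp_le_exp.2 (hm i))
    _ ≤ exp (-m) := by
        rw [Finset.sum_const, Finset.card_univ, Fintype.card_fin, nsmul_eq_mul, ← mul_assoc]
        refine mul_le_of_le_one_left (exp_nonneg _) ?_
        rcases eq_or_ne (n : ℝ) 0 with h | h <;> simp [h]

lemma iInf_logisticLoss_eq_zero {v : E} {γ : ℝ} (hγ : 0 < γ) (hsep : ∀ i, ⟪b i, v⟫ ≤ -γ) :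
    ⨅ x, logisticLoss b x = 0 := by
  refine ciInf_eq_of_forall_ge_of_forall_gt_exists_lt (logisticLoss_nonneg b) fun ε hε => ?_
  obtain ⟨t, htε, ht⟩ := (((tendsto_exp_neg_atTop_nhds_zero.comp
    (Filter.tendsto_id.atTop_mul_const hγ)).eventually (gt_mem_nhds hε)).and
    (Filter.eventually_ge_atTop 0)).exists
  refine ⟨t • v, (logisticLoss_le_exp_neg b (m := t * γ) fun i => ?_).trans_lt htε⟩
  rw [real_inner_smul_right, ← mul_neg]
  exact mul_le_mul_of_nonneg_left (hsep i) ht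

variable [CompleteSpace E]

lemma hasGradientAt_logisticLoss (x : E) :
    HasGradientAt (logisticLoss b) ((1 / (n : ℝ)) • ∑ i, sigmoid ⟪b i, x⟫ • b i) x := by
  rw [hasGradientAt_iff_hasFDerivAt]
  refine (hasFDerivAt_logisticLoss b x).congr_fderiv ?_
  ext z
  simp

lemma gradient_logisticLoss :
    gradient (logisticLoss b) = fun x => (1 / (n : ℝ)) • ∑ i, sigmoid ⟪b i, x⟫ • b i :=
  gradient_eq (hasGradientAt_logisticLoss b)

lemma hasFDerivAt_gradient_logisticLoss (x : E) :
    HasFDerivAt (gradient (logisticLoss b))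
      ((1 / (n : ℝ)) • ∑ i, (sigmoid ⟪b i, x⟫ * sigmoid (-⟪b i, x⟫)) • rankOne ℝ (b i) (b i))
      x := by
  rw [gradient_logisticLoss]
  refine (HasFDerivAt.fun_sum fun i _ => hasFDerivAt_comp_inner_smul (b i) x ?_).const_smul _
  simpa only [sigmoid_neg] using hasDerivAt_sigmoid _

lemma inner_hessian_logisticLoss_le (x g : E) :
    ⟪g, fderiv ℝ (gradient (logisticLoss b)) x g⟫
      ≤ ((1 / (n : ℝ)) * ∑ i, sigmoid ⟪b i, x⟫ * sigmoid (-⟪b i, x⟫) * ‖b i‖ ^ 2) * ‖g‖ ^ 2 := by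
  rw [(hasFDerivAt_gradient_logisticLoss b x).fderiv, mul_assoc (1 / (n : ℝ)), Finset.sum_mul]
  simp only [FunLike.coe_smul, FunLike.coe_sum, Pi.smul_apply, Finset.sum_apply, rankOne_apply,
    inner_smul_right, inner_sum, mul_assoc]
  gcongr _ * ∑ i, _ * (_ * ?_) with i
  · exact sigmoid_nonneg _
  · exact sigmoid_nonneg _
  · rw [real_inner_comm (b i) g, ← real_inner_self_eq_norm_sq (b i), ← real_inner_self_eq_norm_sq g]
    exact real_inner_mul_inner_self_le _ _

lemma inner_hessian_logisticLoss_le_sqrt (x g : E) :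
    ⟪g, fderiv ℝ (gradient (logisticLoss b)) x g⟫
      ≤ 2 / (3 * √3) * ((1 / (n : ℝ)) * ∑ i, ‖b i‖ ^ 4) ^ ((1 : ℝ) / 2)
          * √(logisticLoss b x) * ‖g‖ ^ 2 := by
  refine (inner_hessian_logisticLoss_le b x g).trans (mul_le_mul_of_nonneg_right ?_ (by positivity))
  calc (1 / (n : ℝ)) * ∑ i, sigmoid ⟪b i, x⟫ * sigmoid (-⟪b i, x⟫) * ‖b i‖ ^ 2
      ≤ (1 / (n : ℝ)) * ∑ i, 2 / (3 * √3) * √(log (1 + exp ⟪b i, x⟫)) * ‖b i‖ ^ 2 := by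
        gcongr _ * ∑ i, ?_ * _ with i
        exact sigmoid_mul_sigmoid_neg_le _
    _ = 2 / (3 * √3) * ((1 / (n : ℝ)) * ∑ i, ‖b i‖ ^ 2 * √(log (1 + exp ⟪b i, x⟫))) := by
        simp only [Finset.mul_sum]; congr 1 with i; ring
    _ ≤ 2 / (3 * √3) * (√((1 / (n : ℝ)) * ∑ i, (‖b i‖ ^ 2) ^ 2)
          * √((1 / (n : ℝ)) * ∑ i, √(log (1 + exp ⟪b i, x⟫)) ^ 2)) :=
        mul_le_mul_of_nonneg_left (mul_sum_mul_le_sqrt_mul_sqrt _ (by positivity) _ _)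
          (by positivity)
    _ = _ := by
        have hsq (t : ℝ) : √(log (1 + exp t)) ^ 2 = log (1 + exp t) :=
          sq_sqrt (log_one_add_exp_nonneg t)
        simp only [← pow_mul, hsq, ← sqrt_eq_rpow, logisticLoss]
        ring

end LogisticLoss

theorem empirical_logistic_directional_smoothness_general {d n : ℕ}
    (a : Fin n → EuclideanSpace ℝ (Fin d)) (y : Fin n → ℝ)
    (hy : ∀ i, y i = 1 ∨ y i = -1)
    (v : EuclideanSpace ℝ (Fin d)) (γ : ℝ) (hγ : 0 < γ)
    (hsep : ∀ i, γ ≤ y i * ⟪a i, v⟫)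
    (f : EuclideanSpace ℝ (Fin d) → ℝ)
    (hf : ∀ x, f x = (1/(n:ℝ)) * ∑ i, Real.log (1 + Real.exp (-(y i * ⟪a i, x⟫)))) :
    (⨅ x, f x) = 0 ∧
    (∀ x : EuclideanSpace ℝ (Fin d), gradient f x ≠ 0 →
      ⟪gradient f x, fderiv ℝ (gradient f) x (gradient f x)⟫ / ‖gradient f x‖^2
        ≤ (2 / (3 * Real.sqrt 3)) * ((1/(n:ℝ)) * ∑ i, ‖a i‖^4) ^ ((1:ℝ)/2)
            * Real.sqrt (f x)) := by
  set b : Fin n → EuclideanSpace ℝ (Fin d) := fun i => -y i • a i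
  have hfb : f = logisticLoss b :=
    funext fun x => by simp [hf, logisticLoss, b, real_inner_smul_left]
  have hnorm (i : Fin n) : ‖b i‖ = ‖a i‖ := by rcases hy i with h | h <;> simp [b, h]
  subst hfb
  refine ⟨iInf_logisticLoss_eq_zero b (v := v) hγ fun i => ?_, fun x hx => ?_⟩
  · simpa [b, real_inner_smul_left] using hsep i
  · rw [div_le_iff₀ (by positivity)]
    simpa only [hnorm] using inner_hessian_logisticLoss_le_sqrt b x (gradient (logisticLoss b) x)

/-- for the empirical logistic loss under linear separability,
`inf f = 0` and the directional curvature is bounded by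
`(2/(3√3))·((1/n)Σ‖aᵢ‖⁴)^{1/2}·√(f(x))` wherever `∇f(x) ≠ 0`. -/
theorem empirical_logistic_directional_smoothness {d n : ℕ} (hn : 0 < n)
    (a : Fin n → EuclideanSpace ℝ (Fin d)) (y : Fin n → ℝ)
    (hy : ∀ i, y i = 1 ∨ y i = -1)
    (v : EuclideanSpace ℝ (Fin d)) (γ : ℝ) (hγ : 0 < γ)
    (hsep : ∀ i, γ ≤ y i * ⟪a i, v⟫)
    (f : EuclideanSpace ℝ (Fin d) → ℝ)
    (hf : ∀ x, f x = (1/(n:ℝ)) * ∑ i, Real.log (1 + Real.exp (-(y i * ⟪a i, x⟫)))) :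
    (⨅ x, f x) = 0 ∧
    (∀ x : EuclideanSpace ℝ (Fin d), gradient f x ≠ 0 →
      ⟪gradient f x, fderiv ℝ (gradient f) x (gradient f x)⟫ / ‖gradient f x‖^2
        ≤ (2 / (3 * Real.sqrt 3)) * ((1/(n:ℝ)) * ∑ i, ‖a i‖^4) ^ ((1:ℝ)/2)
            * Real.sqrt (f x)) :=
  empirical_logistic_directional_smoothness_general a y hy v γ hγ hsep f hf
end

section
/- Let f : ℝ^d → ℝ be convex and differentiable, let x* be a global minimizer with f* = f(x*), and let H, L, D > 0. Let (x^k) be a sequence with ‖x^k − x*‖ ≤ D for all k, such that for every k at least one of the following holds: f(x^{k+1}) ≤ f(x^k) − (1/(3√H))·‖∇f(x^k)‖^{3/2}, or f(x^{k+1}) ≤ f(x^k) − (2/(9L))·‖∇f(x^k)‖². Then for every k: (i) if (f(x^k) − f*)^{1/2} ≥ (3/2)·L·D²/√(H·D³), then f(x^{k+1}) − f* ≤ f(x^k) − f* − (1/(3√(H·D³)))·(f(x^k) − f*)^{3/2}; and (ii) if (f(x^k) − f*)^{1/2} ≤ (3/2)·L·D²/√(H·D³), then f(x^{k+1}) − f*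 ≤ f(x^k) − f* − (2/(9·L·D²))·(f(x^k) − f*)². -/
/-!
Convexity gives the gradient-dominance bound `f x - f* ≤ D ‖∇f x‖`. Substituting
`‖∇f x‖ ≥ (f x - f*) / D` into the two admissible decreases turns them into
`(f x - f*)^{3/2} / (3 √(H D³))` and `2 (f x - f*)² / (9 L D²)`, so each step decreases the gap by
at least the smaller of the two. The threshold `(3/2) L D² / √(H D³)` on `(f x - f*)^{1/2}` is
exactly where the two expressions cross.
-/

open scoped RealInnerProductSpace
open Set

theorem ConvexOn.add_le_of_hasFDerivAt {E : Type*} [NormedAddCommGroup E] [NormedSpace ℝ E]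
    {f : E → ℝ} {f' : E →L[ℝ] ℝ} {a : E} (hconv : ConvexOn ℝ univ f)
    (hf : HasFDerivAt f f' a) (b : E) : f a + f' (b - a) ≤ f b := by
  set ℓ : ℝ →ᵃ[ℝ] E := AffineMap.lineMap a b
  have hderiv : HasDerivAt (f ∘ ℓ) (f' (b - a)) 0 := by
    apply HasFDerivAt.comp_hasDerivAt _ _ AffineMap.hasDerivAt_lineMap
    simpa [ℓ] using hf
  have hslope := (hconv.comp_affineMap ℓ).le_slope_of_hasDerivAt
    (mem_univ 0) (mem_univ 1) one_pos hderiv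
  simp only [slope, ℓ, Function.comp_apply, AffineMap.lineMap_apply_zero,
    AffineMap.lineMap_apply_one, vsub_eq_sub, sub_zero, inv_one, one_smul] at hslope
  linarith

theorem ConvexOn.add_inner_le_of_hasGradientAt {E : Type*} [NormedAddCommGroup E]
    [InnerProductSpace ℝ E] [CompleteSpace E] {f : E → ℝ} {f' a : E}
    (hconv : ConvexOn ℝ univ f) (hf : HasGradientAt f f' a) (b : E) :
    f a + ⟪f', b - a⟫ ≤ f b := by
  simpa using hconv.add_le_of_hasFDerivAt hf.hasFDerivAt b

theorem ConvexOn.sub_le_norm_mul_norm_sub_of_hasGradientAt {E : Type*} [NormedAddCommGroup E]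
    [InnerProductSpace ℝ E] [CompleteSpace E] {f : E → ℝ} {f' a : E}
    (hconv : ConvexOn ℝ univ f) (hf : HasGradientAt f f' a) (b : E) :
    f a - f b ≤ ‖f'‖ * ‖a - b‖ := by
  have hsupport := hconv.add_inner_le_of_hasGradientAt hf b
  have hcs : ⟪f', a - b⟫ ≤ ‖f'‖ * ‖a - b‖ := real_inner_le_norm f' (a - b)
  rw [← neg_sub a b, inner_neg_right] at hsupport
  linarith

theorem div_rpow_mul_rpow_le_of_le_mul {c D Δ g p : ℝ} (hc : 0 ≤ c) (hD : 0 < D)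
    (hΔ : 0 ≤ Δ) (hp : 0 ≤ p) (h : Δ ≤ D * g) : c / D ^ p * Δ ^ p ≤ c * g ^ p := by
  rw [div_mul_eq_mul_div, mul_div_assoc, ← Real.div_rpow hΔ hD.le]
  gcongr
  rwa [div_le_iff₀' hD]

theorem Real.sqrt_mul_pow_three (H : ℝ) {D : ℝ} (hD : 0 ≤ D) :
    √(H * D ^ 3) = √H * D ^ (3 / 2 : ℝ) := by
  rw [Real.sqrt_mul' H (by positivity), Real.sqrt_eq_rpow (D ^ 3), ← Real.rpow_natCast,
    ← Real.rpow_mul hD]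
  norm_num

theorem sq_eq_rpow_half_mul_rpow_three_halves {Δ : ℝ} (hΔ : 0 ≤ Δ) :
    Δ ^ 2 = Δ ^ (1 / 2 : ℝ) * Δ ^ (3 / 2 : ℝ) := by
  rw [← Real.rpow_add' hΔ (by norm_num)]
  norm_num

theorem mul_rpow_three_halves_le_mul_sq {c q Δ : ℝ} (hΔ : 0 ≤ Δ) (hq : 0 < q)
    (h : c / q ≤ Δ ^ (1 / 2 : ℝ)) : c * Δ ^ (3 / 2 : ℝ) ≤ q * Δ ^ 2 := by
  rw [sq_eq_rpow_half_mul_rpow_three_halves hΔ, ← mul_assoc]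
  gcongr
  rwa [div_le_iff₀' hq] at h

theorem mul_sq_le_mul_rpow_three_halves {c q Δ : ℝ} (hΔ : 0 ≤ Δ) (hq : 0 < q)
    (h : Δ ^ (1 / 2 : ℝ) ≤ c / q) : q * Δ ^ 2 ≤ c * Δ ^ (3 / 2 : ℝ) := by
  rw [sq_eq_rpow_half_mul_rpow_three_halves hΔ, ← mul_assoc]
  gcongr
  rwa [le_div_iff₀' hq] at h

theorem two_regime_lemma_general {d : ℕ}
    (f : EuclideanSpace ℝ (Fin d) → ℝ)
    (hf : Differentiable ℝ f) (hconv : ConvexOn ℝ Set.univ f)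
    (xstar : EuclideanSpace ℝ (Fin d)) (hmin : ∀ y, f xstar ≤ f y)
    (H L D : ℝ) (hL : 0 < L) (hD : 0 < D)
    (x : ℕ → EuclideanSpace ℝ (Fin d))
    (hdist : ∀ k, ‖x k - xstar‖ ≤ D)
    (hstep : ∀ k,
      f (x (k+1)) ≤ f (x k)
          - (1/(3*Real.sqrt H)) * ‖gradient f (x k)‖ ^ ((3:ℝ)/2) ∨
      f (x (k+1)) ≤ f (x k) - (2/(9*L)) * ‖gradient f (x k)‖^2) :
    ∀ k : ℕ,
      ((f (x k) - f xstar) ^ ((1:ℝ)/2) ≥ (3/2) * L * D^2 / Real.sqrt (H * D^3) →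
        f (x (k+1)) - f xstar ≤ f (x k) - f xstar
          - (1/(3*Real.sqrt (H * D^3))) * (f (x k) - f xstar) ^ ((3:ℝ)/2)) ∧
      ((f (x k) - f xstar) ^ ((1:ℝ)/2) ≤ (3/2) * L * D^2 / Real.sqrt (H * D^3) →
        f (x (k+1)) - f xstar ≤ f (x k) - f xstar
          - (2/(9*L*D^2)) * (f (x k) - f xstar)^2) := by
  intro k
  set Δ := f (x k) - f xstar
  set g := ‖gradient f (x k)‖
  have hΔ : 0 ≤ Δ := sub_nonneg.2 (hmin (x k))
  have hgap : Δ ≤ D * g := by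
    calc Δ ≤ g * ‖x k - xstar‖ :=
          hconv.sub_le_norm_mul_norm_sub_of_hasGradientAt (hf (x k)).hasGradientAt xstar
      _ ≤ D * g := by rw [mul_comm]; gcongr; exact hdist k
  have hcubic :
      1 / (3 * √(H * D ^ 3)) * Δ ^ (3 / 2 : ℝ) ≤ 1 / (3 * √H) * g ^ (3 / 2 : ℝ) := by
    have := div_rpow_mul_rpow_le_of_le_mul (c := 1 / (3 * √H)) (p := 3 / 2) (by positivity) hD hΔ
      (by norm_num) hgap
    rwa [Real.sqrt_mul_pow_three H hD.le, ← mul_assoc, ← div_div]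
  have hquad : 2 / (9 * L * D ^ 2) * Δ ^ 2 ≤ 2 / (9 * L) * g ^ 2 := by
    have := div_rpow_mul_rpow_le_of_le_mul (c := 2 / (9 * L)) (p := 2) (by positivity) hD hΔ
      (by norm_num) hgap
    simpa only [Real.rpow_two, div_div] using this
  have hq : 0 < 2 / (9 * L * D ^ 2) := by positivity
  have hτ : 3 / 2 * L * D ^ 2 / √(H * D ^ 3) =
      1 / (3 * √(H * D ^ 3)) / (2 / (9 * L * D ^ 2)) := by
    field_simp
    ring
  rw [hτ]
  refine ⟨fun hlarge => ?_, fun hsmall => ?_⟩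
  · have := mul_rpow_three_halves_le_mul_sq hΔ hq hlarge
    rcases hstep k with h | h <;> linarith
  · have := mul_sq_le_mul_rpow_three_halves hΔ hq hsmall
    rcases hstep k with h | h <;> linarith

/-- two-regime per-step decrease for a sequence enjoying either a
cubic-model or a quadratic-model gradient decrease. -/
theorem two_regime_lemma {d : ℕ}
    (f : EuclideanSpace ℝ (Fin d) → ℝ)
    (hf : Differentiable ℝ f) (hconv : ConvexOn ℝ Set.univ f)
    (xstar : EuclideanSpace ℝ (Fin d)) (hmin : ∀ y, f xstar ≤ f y)
    (H L D : ℝ) (hH : 0 < H) (hL : 0 < L) (hD : 0 < D)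
    (x : ℕ → EuclideanSpace ℝ (Fin d))
    (hdist : ∀ k, ‖x k - xstar‖ ≤ D)
    (hstep : ∀ k,
      f (x (k+1)) ≤ f (x k)
          - (1/(3*Real.sqrt H)) * ‖gradient f (x k)‖ ^ ((3:ℝ)/2) ∨
      f (x (k+1)) ≤ f (x k) - (2/(9*L)) * ‖gradient f (x k)‖^2) :
    ∀ k : ℕ,
      ((f (x k) - f xstar) ^ ((1:ℝ)/2) ≥ (3/2) * L * D^2 / Real.sqrt (H * D^3) →
        f (x (k+1)) - f xstar ≤ f (x k) - f xstar
          - (1/(3*Real.sqrt (H * D^3))) * (f (x k) - f xstar) ^ ((3:ℝ)/2)) ∧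
      ((f (x k) - f xstar) ^ ((1:ℝ)/2) ≤ (3/2) * L * D^2 / Real.sqrt (H * D^3) →
        f (x (k+1)) - f xstar ≤ f (x k) - f xstar
          - (2/(9*L*D^2)) * (f (x k) - f xstar)^2) :=
  two_regime_lemma_general f hf hconv xstar hmin H L D hL hD x hdist hstep
end

section
/- Let f : ℝ^d → ℝ be convex and differentiable, let x* be a global minimizer with f* = f(x*), and let H, L, D > 0. Let (x^k) be a sequence with ‖x^k − x*‖ ≤ D for all k, such that for every k at least one of the following holds: f(x^{k+1}) ≤ f(x^k) − (1/(3√H))·‖∇f(x^k)‖^{3/2}, or f(x^{k+1}) ≤ f(x^k) − (2/(9L))·‖∇f(x^k)‖². Fix K ≥ 1 and suppose (f(x^j) − f*)^{1/2} ≥ (3/2)·L·D²/√(H·D³) for all 0 ≤ j ≤ K. Then f(x^K) − f* ≤ (9·√(H·D³) + 3·√(f(x⁰) − f*))² / K². -/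
open scoped RealInnerProductSpace

/-!
Write `δₖ = f(xᵏ) - f*` and `q = √(H D³)`. Convexity gives `δₖ ≤ D ‖∇f(xᵏ)‖`, and with it either
decrease condition yields `δₖ₊₁ ≤ δₖ - δₖ^{3/2} / (3q)`: the cubic one directly, the gradient one
because in the regime `√δₖ ≥ 3LD²/(2q)` its guaranteed decrease `2δₖ²/(9LD²)` is the larger.
For `sₖ = √δₖ` this recursion gives `sₖ - sₖ₊₁ ≥ sₖ² / (6q)`, so `1/sₖ` grows by at least
`1/(6q)` per step and `K s_K ≤ 6q`, i.e. `δ_K ≤ 36 q² / K²`.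
-/

theorem ConvexOn.add_apply_sub_le_of_hasFDerivAt {E : Type*} [NormedAddCommGroup E]
    [NormedSpace ℝ E] {s : Set E} {f : E → ℝ} {f' : E →L[ℝ] ℝ} {x y : E}
    (hconv : ConvexOn ℝ s f) (hx : x ∈ s) (hy : y ∈ s) (hf : HasFDerivAt f f' x) :
    f x + f' (y - x) ≤ f y := by
  have hline := hconv.comp_affineMap (AffineMap.lineMap x y : ℝ →ᵃ[ℝ] E)
  have hderiv : HasDerivAt (f ∘ AffineMap.lineMap (k := ℝ) x y) (f' (y - x)) 0 :=
    hf.comp_hasDerivAt_of_eq (x := (0 : ℝ)) AffineMap.hasDerivAt_lineMap (by simp)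
  have hslope := hline.le_slope_of_hasDerivAt (x := 0) (y := 1) (by simpa) (by simpa) one_pos
    hderiv
  simp only [slope_def_field, Function.comp_apply, AffineMap.lineMap_apply_zero,
    AffineMap.lineMap_apply_one, sub_zero, div_one] at hslope
  linarith

theorem ConvexOn.sub_le_norm_gradient_mul {E : Type*} [NormedAddCommGroup E]
    [InnerProductSpace ℝ E] [CompleteSpace E] {s : Set E} {f : E → ℝ} {x y : E}
    (hconv : ConvexOn ℝ s f) (hx : x ∈ s) (hy : y ∈ s) (hf : DifferentiableAt ℝ f x) :
    f x - f y ≤ ‖gradient f x‖ * ‖x - y‖ := by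
  have h := hconv.add_apply_sub_le_of_hasFDerivAt hx hy hf.hasGradientAt.hasFDerivAt
  rw [InnerProductSpace.toDual_apply_apply] at h
  calc f x - f y ≤ ⟪gradient f x, x - y⟫ := by
        rw [← neg_sub y x, inner_neg_right]; linarith
    _ ≤ ‖gradient f x‖ * ‖x - y‖ := real_inner_le_norm _ _

theorem cubic_step_decrease_le {H D δ G : ℝ} (hH : 0 < H) (hD : 0 < D) (hδ : 0 ≤ δ)
    (hgap : δ ≤ D * G) :
    √δ ^ 3 / (3 * √(H * D ^ 3)) ≤ 1 / (3 * √H) * G ^ ((3 : ℝ) / 2) := by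
  have hG : 0 ≤ G := nonneg_of_mul_nonneg_right (hδ.trans hgap) hD
  have hGpow : G ^ ((3 : ℝ) / 2) = √G ^ 3 := by
    rw [Real.sqrt_eq_rpow, ← Real.rpow_natCast, ← Real.rpow_mul hG]; norm_num
  have hsplit : √(H * D ^ 3) = √H * √D ^ 3 := by
    have hcube : D ^ 3 = (√D ^ 3) ^ 2 := by
      rw [← pow_mul, mul_comm, pow_mul, Real.sq_sqrt hD.le]
    rw [Real.sqrt_mul hH.le, hcube, Real.sqrt_sq (by positivity)]
  have hsqrt : √δ ≤ √D * √G := by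
    rw [← Real.sqrt_mul hD.le]; exact Real.sqrt_le_sqrt hgap
  have hH' : 0 < √H := Real.sqrt_pos.2 hH
  have hD' : 0 < √D := Real.sqrt_pos.2 hD
  rw [hGpow, hsplit, div_le_iff₀ (by positivity)]
  calc √δ ^ 3 ≤ (√D * √G) ^ 3 := by gcongr
    _ = 1 / (3 * √H) * √G ^ 3 * (3 * (√H * √D ^ 3)) := by field_simp

theorem gradient_step_decrease_le {L D q δ G : ℝ} (hL : 0 < L) (hD : 0 < D) (hq : 0 < q)
    (hδ : 0 ≤ δ) (hgap : δ ≤ D * G) (hreg : 3 / 2 * L * D ^ 2 / q ≤ √δ) :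
    √δ ^ 3 / (3 * q) ≤ 2 / (9 * L) * G ^ 2 := by
  have hG : 0 ≤ G := nonneg_of_mul_nonneg_right (hδ.trans hgap) hD
  rw [div_le_iff₀ hq] at hreg
  have hs4 : √δ ^ 4 ≤ D ^ 2 * G ^ 2 := by
    have := Real.sq_sqrt hδ
    nlinarith
  have key : D ^ 2 * (9 * L * √δ ^ 3) ≤ D ^ 2 * (6 * q * G ^ 2) :=
    calc D ^ 2 * (9 * L * √δ ^ 3) = 6 * (3 / 2 * L * D ^ 2) * √δ ^ 3 := by ring
      _ ≤ 6 * (√δ * q) * √δ ^ 3 := by gcongr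
      _ = 6 * q * √δ ^ 4 := by ring
      _ ≤ 6 * q * (D ^ 2 * G ^ 2) := by gcongr
      _ = D ^ 2 * (6 * q * G ^ 2) := by ring
  have := le_of_mul_le_mul_left key (by positivity)
  rw [div_le_iff₀ (by positivity)]
  calc √δ ^ 3 = 9 * L * √δ ^ 3 / (9 * L) := by field_simp
    _ ≤ 6 * q * G ^ 2 / (9 * L) := by gcongr
    _ = 2 / (9 * L) * G ^ 2 * (3 * q) := by field_simp; ring

theorem step_decrease_of_regime {H L D δ δ' G : ℝ} (hH : 0 < H) (hL : 0 < L) (hD : 0 < D)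
    (hδ : 0 ≤ δ) (hgap : δ ≤ D * G)
    (hreg : 3 / 2 * L * D ^ 2 / √(H * D ^ 3) ≤ √δ)
    (hstep : δ' ≤ δ - 1 / (3 * √H) * G ^ ((3 : ℝ) / 2) ∨ δ' ≤ δ - 2 / (9 * L) * G ^ 2) :
    δ' ≤ δ - √δ ^ 3 / (3 * √(H * D ^ 3)) := by
  rcases hstep with hcubic | hgrad
  · linarith [cubic_step_decrease_le hH hD hδ hgap]
  · linarith [gradient_step_decrease_le hL hD (by positivity) hδ hgap hreg]

theorem nat_mul_le_of_sq_succ_le_sq_sub {s : ℕ → ℝ} {c : ℝ} {K : ℕ} (hc : 0 < c)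
    (hs : ∀ k, 0 ≤ s k) (hrec : ∀ k < K, s (k + 1) ^ 2 ≤ s k ^ 2 - s k ^ 3 / c) :
    ∀ j ≤ K, (j : ℝ) * s j ≤ 2 * c := by
  intro j
  induction j with
  | zero => intro; simp; positivity
  | succ n ih =>
    intro hn
    have ihn := ih (by omega)
    have hrecn := hrec n hn
    have ha := hs (n + 1)
    have hb := hs n
    set a := s (n + 1)
    set b := s n
    have hab : a ≤ b := by
      have : 0 ≤ b ^ 3 / c := by positivity
      exact (pow_le_pow_iff_left₀ ha hb two_ne_zero).1 (by linarith)
    rcases hb.eq_or_lt with hb0 | hbpos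
    · have : a = 0 := le_antisymm (hb0 ▸ hab) ha
      simp [this, hc.le]
    have hcube : b ^ 3 ≤ b * (2 * c * (b - a)) := by
      rw [le_sub_iff_add_le, ← le_sub_iff_add_le', div_le_iff₀ hc] at hrecn
      nlinarith [mul_le_mul_of_nonneg_left hab (mul_nonneg (sub_nonneg.2 hab) hc.le)]
    have hsq : b ^ 2 ≤ 2 * c * (b - a) := by
      rwa [pow_succ', mul_le_mul_iff_of_pos_left hbpos] at hcube
    have : ((n : ℝ) + 1) * a * b ≤ 2 * c * b := by
      nlinarith [mul_le_mul_of_nonneg_right ihn ha, mul_le_mul_of_nonneg_left hab ha]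
    push_cast
    exact le_of_mul_le_mul_right this hbpos

/-- `O(1/K²)` rate while the iterates remain in the accelerated
(cubic) regime. -/
theorem accelerated_regime_rate {d : ℕ}
    (f : EuclideanSpace ℝ (Fin d) → ℝ)
    (hf : Differentiable ℝ f) (hconv : ConvexOn ℝ Set.univ f)
    (xstar : EuclideanSpace ℝ (Fin d)) (hmin : ∀ y, f xstar ≤ f y)
    (H L D : ℝ) (hH : 0 < H) (hL : 0 < L) (hD : 0 < D)
    (x : ℕ → EuclideanSpace ℝ (Fin d))
    (hdist : ∀ k, ‖x k - xstar‖ ≤ D)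
    (hstep : ∀ k,
      f (x (k+1)) ≤ f (x k)
          - (1/(3*Real.sqrt H)) * ‖gradient f (x k)‖ ^ ((3:ℝ)/2) ∨
      f (x (k+1)) ≤ f (x k) - (2/(9*L)) * ‖gradient f (x k)‖^2)
    (K : ℕ) (hK : 1 ≤ K)
    (hreg : ∀ j : ℕ, j ≤ K →
      (f (x j) - f xstar) ^ ((1:ℝ)/2) ≥ (3/2) * L * D^2 / Real.sqrt (H * D^3)) :
    f (x K) - f xstar
      ≤ (9 * Real.sqrt (H * D^3) + 3 * Real.sqrt (f (x 0) - f xstar))^2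
          / (K:ℝ)^2 := by
  set q := √(H * D ^ 3)
  set δ : ℕ → ℝ := fun k ↦ f (x k) - f xstar
  have hq : 0 < q := by positivity
  have hδ k : 0 ≤ δ k := sub_nonneg.2 (hmin (x k))
  have hgap k : δ k ≤ D * ‖gradient f (x k)‖ :=
    (hconv.sub_le_norm_gradient_mul trivial trivial (hf _)).trans
      (by rw [mul_comm]; gcongr; exact hdist k)
  have hdecrease : ∀ k < K, √(δ (k + 1)) ^ 2 ≤ √(δ k) ^ 2 - √(δ k) ^ 3 / (3 * q) := by
    intro k hk
    rw [Real.sq_sqrt (hδ _), Real.sq_sqrt (hδ _)]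
    have hregk := hreg k hk.le
    rw [← Real.sqrt_eq_rpow] at hregk
    exact step_decrease_of_regime hH hL hD (hδ k) (hgap k) hregk
      ((hstep k).imp (fun h ↦ by simp only [δ]; linarith) (fun h ↦ by simp only [δ]; linarith))
  have hrate := nat_mul_le_of_sq_succ_le_sq_sub (by positivity) (fun k ↦ Real.sqrt_nonneg (δ k))
    hdecrease K le_rfl
  have hKpos : (0 : ℝ) < K := by exact_mod_cast hK
  rw [le_div_iff₀ (by positivity)]
  calc δ K * K ^ 2 = (K * √(δ K)) ^ 2 := by rw [mul_pow, Real.sq_sqrt (hδ K)]; ring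
    _ ≤ (2 * (3 * q)) ^ 2 := by gcongr
    _ ≤ (9 * q + 3 * √(δ 0)) ^ 2 := by gcongr; linarith [Real.sqrt_nonneg (δ 0)]
end

section
/- Let g ∈ ℝ^d with g ≠ 0, let B be a symmetric linear map on ℝ^d, and let M > 0 with M ≥ 4·⟨g, Bg⟩² / ‖g‖⁵. Set s = g/√(M·‖g‖). Then −⟨g, s⟩ + ½·⟨s, B s⟩ + (M/3)·‖s‖³ ≤ −(5/(12·√M))·‖g‖^{3/2}. -/
open scoped RealInnerProductSpace

/-- stochastic cubic-model decrease certificate: for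
`s = g/√(M‖g‖)` with `M ≥ 4⟨g,Bg⟩²/‖g‖⁵`, the cubic model value is at most
`−(5/(12√M))‖g‖^{3/2}`. -/
theorem stochastic_cubic_model_bound {d : ℕ}
    (g : EuclideanSpace ℝ (Fin d)) (hg : g ≠ 0)
    (B : EuclideanSpace ℝ (Fin d) →L[ℝ] EuclideanSpace ℝ (Fin d))
    (hB : ∀ u w : EuclideanSpace ℝ (Fin d), ⟪B u, w⟫ = ⟪u, B w⟫)
    (M : ℝ) (hM : 0 < M) (hM' : 4 * ⟪g, B g⟫^2 / ‖g‖^5 ≤ M)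
    (s : EuclideanSpace ℝ (Fin d))
    (hs : s = (Real.sqrt (M * ‖g‖))⁻¹ • g) :
    -⟪g, s⟫ + (1/2) * ⟪s, B s⟫ + (M/3) * ‖s‖^3
      ≤ -(5/(12*Real.sqrt M)) * ‖g‖ ^ ((3:ℝ)/2) := by
  subst hs
  have hn : 0 < ‖g‖ := norm_pos_iff.mpr hg
  have ha : 0 < Real.sqrt M := Real.sqrt_pos.mpr hM
  have hb : 0 < Real.sqrt ‖g‖ := Real.sqrt_pos.mpr hn
  set n := ‖g‖ with hn'
  set c := (⟪g, B g⟫ : ℝ) with hc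
  set a := Real.sqrt M with haa
  set b := Real.sqrt n with hbb
  have ha2 : a^2 = M := Real.sq_sqrt hM.le
  have hb2 : b^2 = n := Real.sq_sqrt hn.le
  have hr : Real.sqrt (M * n) = a * b := Real.sqrt_mul hM.le n
  have h1 : (⟪g, (Real.sqrt (M * n))⁻¹ • g⟫ : ℝ) = (a*b)⁻¹ * n^2 := by
    rw [hr, inner_smul_right, real_inner_self_eq_norm_sq]
  have h2 : (⟪(Real.sqrt (M * n))⁻¹ • g, B ((Real.sqrt (M * n))⁻¹ • g)⟫ : ℝ)
      = (a*b)⁻¹ * ((a*b)⁻¹ * c) := by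
    rw [hr, map_smul, inner_smul_left, inner_smul_right]
    simp [hc]
  have h3 : ‖(Real.sqrt (M * n))⁻¹ • g‖ = (a*b)⁻¹ * n := by
    rw [norm_smul, Real.norm_eq_abs, hr, abs_inv, abs_of_pos (mul_pos ha hb)]
  have h4 : n ^ ((3:ℝ)/2) = b^3 := by
    rw [← hb2, ← Real.rpow_natCast b 2, ← Real.rpow_mul hb.le,
      ← Real.rpow_natCast b 3]
    norm_num
  rw [h1, h2, h3, h4]
  have h5 : 4 * c^2 ≤ M * n^5 := by
    rw [div_le_iff₀ (by positivity)] at hM'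
    linarith
  rw [← ha2, ← hb2] at h5
  have h6 : (2*c)^2 ≤ (a*b^5)^2 := by nlinarith [h5]
  have hkey : 2 * c ≤ a * b^5 := by
    nlinarith [h6, mul_pos ha (pow_pos hb 5)]
  rw [← ha2, ← hb2]
  have ha' : a ≠ 0 := ne_of_gt ha
  have hb' : b ≠ 0 := ne_of_gt hb
  rw [← sub_nonneg]
  have heq : -(5/(12*a)) * b^3 - (-((a*b)⁻¹ * (b^2)^2) + 1/2 * ((a*b)⁻¹ * ((a*b)⁻¹ * c))
      + a^2/3 * ((a*b)⁻¹ * b^2)^3) = (a*b^5 - 2*c) / (4*a^2*b^2) := by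
    field_simp
    ring
  rw [heq]
  exact div_nonneg (by linarith) (by positivity)
end
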